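/- arXiv:1711.03885 — 10 statements merged into one kernel-verified Lean document; each statement's English description precedes it below -/
import Mathlib

section
/- Let G be a finite graph, p, q ≥ 0 integers, and μ : 2^{V(G)} → ℕ a monotone function (X ⊆ Y implies μ(X) ≤ μ(Y)). If every vertex v ∈ V(G) is contained in some set C with μ(C) ≤ p and d(C) ≤ q, then V(G) can be partitioned into sets C₁, …, C_t such that μ(C_i) ≤ p and d(C_i) ≤ q for each i. -/
/-!
The cut function `d` is posimodular: `d(A \ B) + d(B \ A) ≤ d(A) + d(B)`. Hence for two
overlapping clusters `C, D`, one of `C \ D`, `D \ C` is again a cluster (`μ` being monotone).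
Among all covers of `V(G)` by clusters take one of minimal total size; replacing `C` by `C \ D`
would shrink it, so its members are pairwise disjoint and form the required partition.
-/

open Finset

/-- The set of edges of `G` with exactly one endpoint in `X`. -/
def cutSet {V : Type*} [Fintype V] [DecidableEq V] (G : SimpleGraph V) [DecidableRel G.Adj]
    (X : Finset V) : Finset (Sym2 V) :=
  G.edgeFinset.filter (fun e =>
    ∃ a ∈ (univ : Finset V), ∃ b ∈ (univ : Finset V), e = s(a, b) ∧ a ∈ X ∧ b ∉ X)

/-- `d(X)`: the number of edges of `G` leaving `X`. -/
def cutCard {V : Type*} [Fintype V] [DecidableEq V] (G : SimpleGraph V) [DecidableRel G.Adj]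
    (X : Finset V) : ℕ :=
  (cutSet G X).card

lemma cutSet_pred_mk_iff {V : Type*} [Fintype V] (X : Finset V) (x y : V) :
    (∃ a ∈ (univ : Finset V), ∃ b ∈ (univ : Finset V), s(x, y) = s(a, b) ∧ a ∈ X ∧ b ∉ X) ↔
      (x ∈ X ∧ y ∉ X) ∨ (y ∈ X ∧ x ∉ X) := by
  constructor
  · rintro ⟨a, -, b, -, h, ha, hb⟩
    rcases Sym2.eq_iff.mp h with ⟨rfl, rfl⟩ | ⟨rfl, rfl⟩
    · exact Or.inl ⟨ha, hb⟩
    · exact Or.inr ⟨ha, hb⟩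
  · rintro (⟨hx, hy⟩ | ⟨hy, hx⟩)
    · exact ⟨x, mem_univ x, y, mem_univ y, rfl, hx, hy⟩
    · exact ⟨y, mem_univ y, x, mem_univ x, Sym2.eq_swap, hy, hx⟩

theorem cutCard_sdiff_add_cutCard_sdiff_le {V : Type*} [Fintype V] [DecidableEq V]
    (G : SimpleGraph V) [DecidableRel G.Adj] (A B : Finset V) :
    cutCard G (A \ B) + cutCard G (B \ A) ≤ cutCard G A + cutCard G B := by
  simp only [cutCard, cutSet, card_filter, ← sum_add_distrib]
  refine sum_le_sum fun e _ => ?_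
  induction e using Sym2.inductionOn with
  | hf x y =>
    simp only [cutSet_pred_mk_iff]
    simp only [mem_sdiff]
    by_cases hxA : x ∈ A <;> by_cases hxB : x ∈ B <;> by_cases hyA : y ∈ A <;>
      by_cases hyB : y ∈ B <;> simp [hxA, hxB, hyA, hyB]

namespace Finset

variable {V : Type*} [DecidableEq V]

def IsCoverBy (S : Finset V → Prop) (P : Finset (Finset V)) : Prop :=
  (∀ C ∈ P, S C) ∧ ∀ v : V, ∃ C ∈ P, v ∈ C

lemma IsCoverBy.insert_sdiff_erase {S : Finset V → Prop} {P : Finset (Finset V)}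
    (hP : IsCoverBy S P) {C D : Finset V} (hC : C ∈ P) (hD : D ∈ P) (hCD : C ≠ D)
    (hS : S (C \ D)) : IsCoverBy S (insert (C \ D) (P.erase C)) := by
  refine ⟨fun E hE => ?_, fun v => ?_⟩
  · rcases mem_insert.mp hE with rfl | hE
    · exact hS
    · exact hP.1 E (mem_of_mem_erase hE)
  · obtain ⟨E, hE, hvE⟩ := hP.2 v
    by_cases hEC : E = C
    · subst hEC
      by_cases hvD : v ∈ D
      · exact ⟨D, mem_insert_of_mem (mem_erase.mpr ⟨hCD.symm, hD⟩), hvD⟩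
      · exact ⟨E \ D, mem_insert_self _ _, mem_sdiff.mpr ⟨hvE, hvD⟩⟩
    · exact ⟨E, mem_insert_of_mem (mem_erase.mpr ⟨hEC, hE⟩), hvE⟩

lemma sum_card_insert_sdiff_erase_lt {P : Finset (Finset V)} {C D : Finset V} (hC : C ∈ P)
    (hCD : (C ∩ D).Nonempty) :
    ∑ E ∈ insert (C \ D) (P.erase C), #E < ∑ E ∈ P, #E := by
  have hle : ∑ E ∈ insert (C \ D) (P.erase C), #E ≤ #(C \ D) + ∑ E ∈ P.erase C, #E := by
    by_cases hmem : C \ D ∈ P.erase C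
    · rw [insert_eq_self.mpr hmem]
      exact Nat.le_add_left _ _
    · rw [sum_insert hmem]
  have hlt : #(C \ D) < #C :=
    card_lt_card (sdiff_lt_left.mpr (not_disjoint_iff_nonempty_inter.mpr (by rwa [inter_comm])))
  rw [← add_sum_erase _ _ hC]
  omega

theorem IsCoverBy.pairwiseDisjoint_of_minimal {S : Finset V → Prop}
    (hS : ∀ C D, S C → S D → S (C \ D) ∨ S (D \ C)) {P : Finset (Finset V)}
    (hP : IsCoverBy S P) (hmin : ∀ Q, IsCoverBy S Q → ∑ E ∈ P, #E ≤ ∑ E ∈ Q, #E) :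
    (P : Set (Finset V)).PairwiseDisjoint id := by
  have disjoint_of_sdiff : ∀ C ∈ P, ∀ D ∈ P, C ≠ D → S (C \ D) → Disjoint C D := by
    intro C hC D hD hCD hCD'
    by_contra hover
    rw [not_disjoint_iff_nonempty_inter] at hover
    exact (sum_card_insert_sdiff_erase_lt hC hover).not_ge
      (hmin _ (hP.insert_sdiff_erase hC hD hCD hCD'))
  intro C hC D hD hCD
  rcases hS C D (hP.1 C hC) (hP.1 D hD) with hCD' | hDC'
  · exact disjoint_of_sdiff C hC D hD hCD hCD'
  · exact (disjoint_of_sdiff D hD C hC hCD.symm hDC').symm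

theorem exists_finpartition_of_sdiff_or_sdiff [Fintype V] {S : Finset V → Prop}
    (hS : ∀ C D, S C → S D → S (C \ D) ∨ S (D \ C)) (hcover : ∀ v : V, ∃ C, v ∈ C ∧ S C) :
    ∃ P : Finpartition (univ : Finset V), ∀ C ∈ P.parts, S C := by
  classical
  choose f hf using hcover
  have hcovers : IsCoverBy S (univ.image f) :=
    ⟨by simpa using fun v => (hf v).2, fun v => ⟨f v, mem_image_of_mem f (mem_univ v), (hf v).1⟩⟩
  obtain ⟨P, hP, hmin⟩ := exists_min_image {Q | IsCoverBy S Q} (fun Q => ∑ E ∈ Q, #E)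
    ⟨_, mem_filter.mpr ⟨mem_univ _, hcovers⟩⟩
  replace hP : IsCoverBy S P := (mem_filter.mp hP).2
  have hdisj := hP.pairwiseDisjoint_of_minimal hS fun Q hQ =>
    hmin Q (mem_filter.mpr ⟨mem_univ _, hQ⟩)
  have hsup : P.sup id = univ := eq_univ_of_forall fun v => by
    obtain ⟨C, hC, hvC⟩ := hP.2 v
    exact mem_sup.mpr ⟨C, hC, hvC⟩
  exact ⟨Finpartition.ofErase P hdisj.supIndep hsup, fun C hC => hP.1 C (mem_of_mem_erase hC)⟩

end Finset

/-- If every vertex is contained in some `(μ,p,q)`-cluster, then the vertex set can be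
partitioned into `(μ,p,q)`-clusters. -/
theorem partition_of_clusters {V : Type*} [Fintype V] [DecidableEq V]
    (G : SimpleGraph V) [DecidableRel G.Adj] (μ : Finset V → ℕ)
    (hmono : ∀ X Y : Finset V, X ⊆ Y → μ X ≤ μ Y) (p q : ℕ)
    (hcover : ∀ v : V, ∃ C : Finset V, v ∈ C ∧ μ C ≤ p ∧ cutCard G C ≤ q) :
    ∃ P : Finset (Finset V),
      (∀ C ∈ P, C.Nonempty) ∧
      (∀ C ∈ P, μ C ≤ p ∧ cutCard G C ≤ q) ∧
      (∀ v : V, ∃! C : Finset V, C ∈ P ∧ v ∈ C) := by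
  have huncross : ∀ C D : Finset V, μ C ≤ p ∧ cutCard G C ≤ q → μ D ≤ p ∧ cutCard G D ≤ q →
      (μ (C \ D) ≤ p ∧ cutCard G (C \ D) ≤ q) ∨ (μ (D \ C) ≤ p ∧ cutCard G (D \ C) ≤ q) := by
    rintro C D ⟨hμC, hdC⟩ ⟨hμD, hdD⟩
    have hμCD := (hmono (C \ D) C sdiff_subset).trans hμC
    have hμDC := (hmono (D \ C) D sdiff_subset).trans hμD
    have := cutCard_sdiff_add_cutCard_sdiff_le G C D
    omega
  obtain ⟨P, hP⟩ := exists_finpartition_of_sdiff_or_sdiff huncross hcover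
  exact ⟨P.parts, fun C => P.nonempty_of_mem_parts, hP, fun v => P.existsUnique_mem (mem_univ v)⟩
end

section
/- Let s, t be distinct vertices of a finite graph G and let λ be the minimum size of an s–t edge separator. Among all minimum s–t separators S of size λ, there is a unique one S* such that the component K_{S*} of G \ S* containing s is inclusionwise maximal: for every minimum s–t separator S, K_S ⊆ K_{S*}. -/
open Finset

/-- `S` is an `s`–`t` edge separator: removing the edges in `S` disconnects `s` from `t`. -/
def IsSeparator {V : Type*} (G : SimpleGraph V) (s t : V) (S : Finset (Sym2 V)) : Prop :=
  ¬ (G.deleteEdges (↑S : Set (Sym2 V))).Reachable s t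

/-- The connected component of `G` minus the edge set `S` that contains `s`, as a vertex set. -/
def sComp {V : Type*} (G : SimpleGraph V) (s : V) (S : Finset (Sym2 V)) : Set V :=
  {u | (G.deleteEdges (↑S : Set (Sym2 V))).Reachable s u}

/-- `S` is an important `s`–`t` separator. -/
def IsImpSep {V : Type*} [Fintype V] [DecidableEq V] (G : SimpleGraph V) [DecidableRel G.Adj]
    (s t : V) (S : Finset (Sym2 V)) : Prop :=
  S ⊆ G.edgeFinset ∧ IsSeparator G s t S ∧
  (∀ S' : Finset (Sym2 V), S' ⊂ S → ¬ IsSeparator G s t S') ∧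
  ¬ ∃ S' : Finset (Sym2 V), S' ⊆ G.edgeFinset ∧ IsSeparator G s t S' ∧
      S'.card ≤ S.card ∧ sComp G s S ⊂ sComp G s S'

section Aux
variable {V : Type*} [Fintype V] [DecidableEq V] (G : SimpleGraph V) [DecidableRel G.Adj]

/-- Ordered crossing pairs. -/
def pairCut (X : Finset V) : Finset (V × V) :=
  Finset.univ.filter (fun p : V × V => G.Adj p.1 p.2 ∧ p.1 ∈ X ∧ p.2 ∉ X)

/-- Edge boundary of `X`. -/
def cutE (X : Finset V) : Finset (Sym2 V) :=
  (pairCut G X).image fun p => s(p.1, p.2)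

lemma mem_cutE {X : Finset V} {e : Sym2 V} :
    e ∈ cutE G X ↔ ∃ a b, G.Adj a b ∧ a ∈ X ∧ b ∉ X ∧ s(a, b) = e := by
  simp only [cutE, pairCut, Finset.mem_image, Finset.mem_filter, Finset.mem_univ, true_and,
    Prod.exists]
  tauto

lemma mem_cutE' {X : Finset V} {x y : V} :
    s(x, y) ∈ cutE G X ↔ G.Adj x y ∧ ((x ∈ X ∧ y ∉ X) ∨ (y ∈ X ∧ x ∉ X)) := by
  rw [mem_cutE]
  constructor
  · rintro ⟨a, b, hab, ha, hb, he⟩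
    rw [Sym2.eq_iff] at he
    rcases he with ⟨rfl, rfl⟩ | ⟨rfl, rfl⟩
    · exact ⟨hab, Or.inl ⟨ha, hb⟩⟩
    · exact ⟨hab.symm, Or.inr ⟨ha, hb⟩⟩
  · rintro ⟨hadj, ⟨hx, hy⟩ | ⟨hy, hx⟩⟩
    · exact ⟨x, y, hadj, hx, hy, rfl⟩
    · exact ⟨y, x, hadj.symm, hy, hx, Sym2.eq_swap⟩

lemma card_cutE (X : Finset V) : (cutE G X).card = (pairCut G X).card := by
  apply Finset.card_image_of_injOn
  rintro ⟨a, b⟩ hab ⟨c, d⟩ hcd he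
  simp only [pairCut, Finset.mem_coe, Finset.mem_filter] at hab hcd
  rw [Sym2.eq_iff] at he
  rcases he with ⟨rfl, rfl⟩ | ⟨rfl, rfl⟩
  · rfl
  · exact absurd hab.2.2.1 hcd.2.2.2

lemma cut_submod (X Y : Finset V) :
    (cutE G (X ∪ Y)).card + (cutE G (X ∩ Y)).card ≤ (cutE G X).card + (cutE G Y).card := by
  simp only [card_cutE, pairCut, Finset.card_filter]
  rw [← Finset.sum_add_distrib, ← Finset.sum_add_distrib]
  apply Finset.sum_le_sum
  rintro ⟨a, b⟩ _
  by_cases hadj : G.Adj a b <;>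
    by_cases hX : a ∈ X <;> by_cases hY : a ∈ Y <;>
    by_cases hbX : b ∈ X <;> by_cases hbY : b ∈ Y <;>
    simp [hadj, hX, hY, hbX, hbY]

lemma cutE_subset_edgeFinset (X : Finset V) : cutE G X ⊆ G.edgeFinset := by
  intro e he
  rw [mem_cutE] at he
  obtain ⟨a, b, hab, -, -, rfl⟩ := he
  rw [SimpleGraph.mem_edgeFinset, SimpleGraph.mem_edgeSet]
  exact hab

lemma walk_mem {X : Finset V} {D : Set (Sym2 V)} (hD : ↑(cutE G X) ⊆ D) :
    ∀ {u v : V}, (G.deleteEdges D).Walk u v → u ∈ X → v ∈ X := by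
  intro u v p
  induction p with
  | nil => exact id
  | @cons u b v h' p ih =>
    intro hu
    apply ih
    rw [SimpleGraph.deleteEdges_adj] at h'
    by_contra hb
    exact h'.2 (hD (by exact_mod_cast (mem_cutE' G).2 ⟨h'.1, Or.inl ⟨hu, hb⟩⟩))

lemma sep_of_cut {s t : V} {X : Finset V} (hs : s ∈ X) (ht : t ∉ X) :
    IsSeparator G s t (cutE G X) := by
  intro h
  obtain ⟨p⟩ := h
  exact ht (walk_mem G (le_refl _) p hs)

/-- The `s`-component as a Finset. -/
noncomputable def Ks (s : V) (S : Finset (Sym2 V)) : Finset V :=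
  (Set.toFinite (sComp G s S)).toFinset

lemma mem_Ks {s u : V} {S : Finset (Sym2 V)} : u ∈ Ks G s S ↔ u ∈ sComp G s S :=
  Set.Finite.mem_toFinset _

lemma s_mem_Ks (s : V) (S : Finset (Sym2 V)) : s ∈ Ks G s S :=
  (mem_Ks G).2 (SimpleGraph.Reachable.refl s)

lemma t_not_mem_Ks {s t : V} {S : Finset (Sym2 V)} (h : IsSeparator G s t S) :
    t ∉ Ks G s S := fun ht => h ((mem_Ks G).1 ht)

lemma cutKs_subset {s : V} (S : Finset (Sym2 V)) : cutE G (Ks G s S) ⊆ S := by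
  intro e he
  rw [mem_cutE] at he
  obtain ⟨a, b, hab, ha, hb, rfl⟩ := he
  by_contra heS
  apply hb
  rw [mem_Ks] at ha ⊢
  exact ha.trans (SimpleGraph.Adj.reachable (by
    rw [SimpleGraph.deleteEdges_adj]; exact ⟨hab, by simpa using heS⟩))

/-- Transfer reachability from `G \ S` to `G \ D'` provided `D'` avoids edges within the
`s`-component of `G \ S`. -/
lemma sComp_transfer {s : V} {S : Finset (Sym2 V)} {D' : Set (Sym2 V)}
    (hE : ∀ x y : V, G.Adj x y → x ∈ sComp G s S → y ∈ sComp G s S → s(x, y) ∉ D') :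
    ∀ {u v : V}, (G.deleteEdges (↑S : Set (Sym2 V))).Walk u v → u ∈ sComp G s S →
      (G.deleteEdges D').Reachable u v := by
  intro u v p
  induction p with
  | nil => exact fun _ => SimpleGraph.Reachable.refl _
  | @cons u b v h' p ih =>
    intro hu
    rw [SimpleGraph.deleteEdges_adj] at h'
    have hb : b ∈ sComp G s S := hu.trans (SimpleGraph.Adj.reachable (by
      rw [SimpleGraph.deleteEdges_adj]; exact h'))
    have hadj : (G.deleteEdges D').Adj u b := by
      rw [SimpleGraph.deleteEdges_adj]
      exact ⟨h'.1, hE u b h'.1 hu hb⟩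
    exact hadj.reachable.trans (ih hb)

end Aux
set_option linter.unusedSectionVars false

section Main
variable {V : Type*} [Fintype V] [DecidableEq V] (G : SimpleGraph V) [DecidableRel G.Adj]

/-- A minimum separator equals the boundary of its `s`-component. -/
lemma min_sep_eq_cut {s t : V} {lam : ℕ}
    (hlam : IsLeast {n : ℕ | ∃ S : Finset (Sym2 V),
        S ⊆ G.edgeFinset ∧ IsSeparator G s t S ∧ S.card = n} lam)
    {S : Finset (Sym2 V)} (hsub : S ⊆ G.edgeFinset) (hsep : IsSeparator G s t S)
    (hcard : S.card = lam) : cutE G (Ks G s S) = S := by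
  have h3 : lam ≤ (cutE G (Ks G s S)).card :=
    hlam.2 ⟨cutE G (Ks G s S), cutE_subset_edgeFinset G _,
      sep_of_cut G (s_mem_Ks G s S) (t_not_mem_Ks G hsep), rfl⟩
  exact Finset.eq_of_subset_of_card_le (cutKs_subset G S) (by rw [hcard]; exact h3)

/-- If `X ⊇` the `s`-component of `G \ S`, then the `s`-component of
`G \ cutE X` contains that of `G \ S`. -/
lemma sComp_subset_sComp_cut {s : V} {S : Finset (Sym2 V)} {X : Finset V}
    (hX : sComp G s S ⊆ ↑X) : sComp G s S ⊆ sComp G s (cutE G X) := by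
  intro u hu
  obtain ⟨p⟩ := (hu : (G.deleteEdges (↑S : Set (Sym2 V))).Reachable s u)
  exact sComp_transfer G (fun x y hadj hx hy hmem => by
      have hmem' : s(x, y) ∈ cutE G X := by exact_mod_cast hmem
      rw [mem_cutE'] at hmem'
      rcases hmem'.2 with ⟨-, h⟩ | ⟨-, h⟩
      · exact h (hX hy)
      · exact h (hX hx)) p (SimpleGraph.Reachable.refl s)

lemma sComp_cut_subset {s : V} {X : Finset V} (hs : s ∈ X) :
    sComp G s (cutE G X) ⊆ ↑X := by
  intro u hu
  obtain ⟨p⟩ := (hu : _root_.SimpleGraph.Reachable _ s u)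
  exact walk_mem G (le_refl _) p hs

theorem unique_max_min_separator' {V : Type*} [Fintype V] [DecidableEq V]
    (G : SimpleGraph V) [DecidableRel G.Adj] (s t : V) (hst : s ≠ t) (lam : ℕ)
    (hlam : IsLeast {n : ℕ | ∃ S : Finset (Sym2 V),
        S ⊆ G.edgeFinset ∧ IsSeparator G s t S ∧ S.card = n} lam) :
    ∃! Sstar : Finset (Sym2 V),
      Sstar ⊆ G.edgeFinset ∧ IsSeparator G s t Sstar ∧ Sstar.card = lam ∧
      ∀ S : Finset (Sym2 V), S ⊆ G.edgeFinset → IsSeparator G s t S → S.card = lam →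
        sComp G s S ⊆ sComp G s Sstar := by
  classical
  obtain ⟨S0, hS0sub, hS0sep, hS0card⟩ := hlam.1
  set 𝒮 : Finset (Finset (Sym2 V)) :=
    G.edgeFinset.powerset.filter (fun S => IsSeparator G s t S ∧ S.card = lam) with h𝒮
  have hmem𝒮 : ∀ S, S ∈ 𝒮 ↔ S ⊆ G.edgeFinset ∧ IsSeparator G s t S ∧ S.card = lam := by
    intro S; simp [h𝒮, Finset.mem_powerset, and_assoc]
  have hne : 𝒮.Nonempty := ⟨S0, (hmem𝒮 S0).2 ⟨hS0sub, hS0sep, hS0card⟩⟩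
  obtain ⟨Sstar, hmem, hmax⟩ := Finset.exists_max_image 𝒮 (fun S => (Ks G s S).card) hne
  obtain ⟨hSsub, hSsep, hScard⟩ := (hmem𝒮 Sstar).1 hmem
  -- main maximality property
  have key : ∀ S : Finset (Sym2 V), S ⊆ G.edgeFinset → IsSeparator G s t S → S.card = lam →
      sComp G s S ⊆ sComp G s Sstar := by
    intro S hsub hsep hcard
    set KA := Ks G s Sstar with hKA
    set KB := Ks G s S with hKB
    set U := KA ∪ KB with hU
    have hcutA : cutE G KA = Sstar := min_sep_eq_cut G hlam hSsub hSsep hScard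
    have hcutB : cutE G KB = S := min_sep_eq_cut G hlam hsub hsep hcard
    have hsU : s ∈ U := Finset.mem_union_left _ (s_mem_Ks G s Sstar)
    have htU : t ∉ U := by
      rw [Finset.mem_union]
      rintro (h | h)
      · exact t_not_mem_Ks G hSsep h
      · exact t_not_mem_Ks G hsep h
    have hsI : s ∈ KA ∩ KB := Finset.mem_inter.2 ⟨s_mem_Ks G s Sstar, s_mem_Ks G s S⟩
    have htI : t ∉ KA ∩ KB := fun h => t_not_mem_Ks G hSsep (Finset.mem_inter.1 h).1
    have hUsep : IsSeparator G s t (cutE G U) := sep_of_cut G hsU htU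
    have hIsep : IsSeparator G s t (cutE G (KA ∩ KB)) := sep_of_cut G hsI htI
    have hUge : lam ≤ (cutE G U).card :=
      hlam.2 ⟨cutE G U, cutE_subset_edgeFinset G _, hUsep, rfl⟩
    have hIge : lam ≤ (cutE G (KA ∩ KB)).card :=
      hlam.2 ⟨cutE G (KA ∩ KB), cutE_subset_edgeFinset G _, hIsep, rfl⟩
    have hsubmod := cut_submod G KA KB
    rw [← hU] at hsubmod
    rw [hcutA, hcutB, hScard, hcard] at hsubmod
    have hUcard : (cutE G U).card = lam := by omega
    -- the s-component of `G \ cutE U` is exactly `U`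
    have hA_sub : sComp G s Sstar ⊆ sComp G s (cutE G U) :=
      sComp_subset_sComp_cut G (by
        intro u hu
        exact Finset.mem_coe.2 (Finset.mem_union_left _ ((mem_Ks G).2 hu)))
    have hB_sub : sComp G s S ⊆ sComp G s (cutE G U) :=
      sComp_subset_sComp_cut G (by
        intro u hu
        exact Finset.mem_coe.2 (Finset.mem_union_right _ ((mem_Ks G).2 hu)))
    have hcut_sub : sComp G s (cutE G U) ⊆ ↑U := sComp_cut_subset G hsU
    have hKsU : Ks G s (cutE G U) = U := by
      apply Finset.Subset.antisymm
      · intro u hu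
        exact hcut_sub ((mem_Ks G).1 hu)
      · intro u hu
        rw [mem_Ks]
        rcases Finset.mem_union.1 hu with h | h
        · exact hA_sub ((mem_Ks G).1 h)
        · exact hB_sub ((mem_Ks G).1 h)
    -- maximality of Sstar forces U = KA
    have hmax' : (Ks G s (cutE G U)).card ≤ KA.card :=
      hmax _ ((hmem𝒮 _).2 ⟨cutE_subset_edgeFinset G _, hUsep, hUcard⟩)
    rw [hKsU] at hmax'
    have hUeq : KA = U :=
      Finset.eq_of_subset_of_card_le (Finset.subset_union_left) hmax'
    intro u hu
    have huB : u ∈ KB := (mem_Ks G).2 hu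
    have huA : u ∈ KA := by
      rw [hUeq]; exact Finset.mem_union_right _ huB
    exact (mem_Ks G).1 huA
  refine ⟨Sstar, ⟨hSsub, hSsep, hScard, key⟩, ?_⟩
  rintro S' ⟨hsub', hsep', hcard', key'⟩
  have h1 : sComp G s S' = sComp G s Sstar :=
    Set.Subset.antisymm (key S' hsub' hsep' hcard') (key' Sstar hSsub hSsep hScard)
  have h2 : Ks G s S' = Ks G s Sstar := by
    ext u; rw [mem_Ks, mem_Ks, h1]
  calc S' = cutE G (Ks G s S') := (min_sep_eq_cut G hlam hsub' hsep' hcard').symm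
    _ = cutE G (Ks G s Sstar) := by rw [h2]
    _ = Sstar := min_sep_eq_cut G hlam hSsub hSsep hScard

end Main


/-- There is a unique minimum `s`–`t` separator whose `s`-side component is
inclusionwise maximal. -/
theorem unique_max_min_separator {V : Type*} [Fintype V] [DecidableEq V]
    (G : SimpleGraph V) [DecidableRel G.Adj] (s t : V) (hst : s ≠ t) (lam : ℕ)
    (hlam : IsLeast {n : ℕ | ∃ S : Finset (Sym2 V),
        S ⊆ G.edgeFinset ∧ IsSeparator G s t S ∧ S.card = n} lam) :
    ∃! Sstar : Finset (Sym2 V),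
      Sstar ⊆ G.edgeFinset ∧ IsSeparator G s t Sstar ∧ Sstar.card = lam ∧
      ∀ S : Finset (Sym2 V), S ⊆ G.edgeFinset → IsSeparator G s t S → S.card = lam →
        sComp G s S ⊆ sComp G s Sstar :=
  unique_max_min_separator' G s t hst lam hlam
end

section
/- Let s, t be vertices of a finite graph G, let S* be the unique minimum s–t separator whose s-side component K_{S*} is inclusionwise maximal. Then for every important s–t separator S, the component of G \ S containing s contains K_{S*}. -/
open Finset

section Aux

variable {V : Type*} [Fintype V] [DecidableEq V] (G : SimpleGraph V) [DecidableRel G.Adj]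

/-- The edge boundary of a vertex set `A`. -/
def bd (A : Finset V) : Finset (Sym2 V) :=
  G.edgeFinset.filter (fun e => (∃ x ∈ e, x ∈ A) ∧ ∃ y ∈ e, y ∉ A)

lemma mem_bd {A : Finset V} {e : Sym2 V} :
    e ∈ bd G A ↔ e ∈ G.edgeFinset ∧ (∃ x ∈ e, x ∈ A) ∧ ∃ y ∈ e, y ∉ A := by
  unfold bd; rw [Finset.mem_filter]

lemma bd_subset_edgeFinset (A : Finset V) : bd G A ⊆ G.edgeFinset :=
  Finset.filter_subset _ _

/-- Submodularity of the edge boundary cardinality. -/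
lemma bd_submodular (A B : Finset V) :
    (bd G (A ∪ B)).card + (bd G (A ∩ B)).card ≤ (bd G A).card + (bd G B).card := by
  have h1 : bd G (A ∪ B) ∪ bd G (A ∩ B) ⊆ bd G A ∪ bd G B := by
    intro e he
    rcases Finset.mem_union.mp he with he | he
    · obtain ⟨hef, ⟨x, hxe, hx⟩, ⟨y, hye, hy⟩⟩ := (mem_bd G).mp he
      rcases Finset.mem_union.mp hx with hx | hx
      · exact Finset.mem_union_left _ ((mem_bd G).mpr ⟨hef, ⟨x, hxe, hx⟩,
          ⟨y, hye, fun h => hy (Finset.mem_union_left _ h)⟩⟩)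
      · exact Finset.mem_union_right _ ((mem_bd G).mpr ⟨hef, ⟨x, hxe, hx⟩,
          ⟨y, hye, fun h => hy (Finset.mem_union_right _ h)⟩⟩)
    · obtain ⟨hef, ⟨x, hxe, hx⟩, ⟨y, hye, hy⟩⟩ := (mem_bd G).mp he
      rw [Finset.mem_inter] at hx
      by_cases hyA : y ∈ A
      · exact Finset.mem_union_right _ ((mem_bd G).mpr ⟨hef, ⟨x, hxe, hx.2⟩,
          ⟨y, hye, fun h => hy (Finset.mem_inter.mpr ⟨hyA, h⟩)⟩⟩)
      · exact Finset.mem_union_left _ ((mem_bd G).mpr ⟨hef, ⟨x, hxe, hx.1⟩, ⟨y, hye, hyA⟩⟩)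
  have h2 : bd G (A ∪ B) ∩ bd G (A ∩ B) ⊆ bd G A ∩ bd G B := by
    intro e he
    rw [Finset.mem_inter] at he
    obtain ⟨hef, ⟨x1, hx1e, hx1⟩, ⟨y1, hy1e, hy1⟩⟩ := (mem_bd G).mp he.1
    obtain ⟨-, ⟨x2, hx2e, hx2⟩, -⟩ := (mem_bd G).mp he.2
    rw [Finset.mem_inter] at hx2
    exact Finset.mem_inter.mpr ⟨(mem_bd G).mpr ⟨hef, ⟨x2, hx2e, hx2.1⟩,
        ⟨y1, hy1e, fun h => hy1 (Finset.mem_union_left _ h)⟩⟩,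
      (mem_bd G).mpr ⟨hef, ⟨x2, hx2e, hx2.2⟩,
        ⟨y1, hy1e, fun h => hy1 (Finset.mem_union_right _ h)⟩⟩⟩
  calc (bd G (A ∪ B)).card + (bd G (A ∩ B)).card
      = (bd G (A ∪ B) ∪ bd G (A ∩ B)).card + (bd G (A ∪ B) ∩ bd G (A ∩ B)).card :=
        (Finset.card_union_add_card_inter _ _).symm
    _ ≤ (bd G A ∪ bd G B).card + (bd G A ∩ bd G B).card :=
        Nat.add_le_add (Finset.card_le_card h1) (Finset.card_le_card h2)
    _ = (bd G A).card + (bd G B).card := Finset.card_union_add_card_inter _ _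

/-- Walks avoiding the boundary of `A` stay inside `A`. -/
lemma sComp_bd_subset {s : V} (A : Finset V) (hs : s ∈ A) :
    sComp G s (bd G A) ⊆ (↑A : Set V) := by
  intro u hu
  obtain ⟨p⟩ := hu
  suffices h : ∀ (a b : V), (G.deleteEdges (↑(bd G A) : Set (Sym2 V))).Walk a b → a ∈ A → b ∈ A from
    h s u p hs
  intro a b p
  induction p with
  | nil => exact id
  | @cons a v w h _ ih =>
    intro ha
    by_cases hv : v ∈ A
    · exact ih hv
    · rw [SimpleGraph.deleteEdges_adj] at h
      exact absurd (Finset.mem_coe.mpr ((mem_bd G).mpr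
        ⟨SimpleGraph.mem_edgeFinset.mpr h.1, ⟨a, Sym2.mem_mk_left a v, ha⟩,
          ⟨v, Sym2.mem_mk_right a v, hv⟩⟩)) h.2

/-- The boundary of a set containing `s` but not `t` separates `s` from `t`. -/
lemma bd_isSeparator {s t : V} (A : Finset V) (hs : s ∈ A) (ht : t ∉ A) :
    IsSeparator G s t (bd G A) := fun hreach => ht (sComp_bd_subset G A hs hreach)

/-- If the `s`-component of `G - S` lies inside `A`, then deleting `bd A` keeps it reachable. -/
lemma reach_transfer {s : V} (S : Finset (Sym2 V)) (A : Finset V)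
    (hK : ∀ x, (G.deleteEdges (↑S : Set (Sym2 V))).Reachable s x → x ∈ A) :
    sComp G s S ⊆ sComp G s (bd G A) := by
  intro u hu
  obtain ⟨p⟩ := hu
  suffices h : ∀ (a b : V), (G.deleteEdges (↑S : Set (Sym2 V))).Walk a b →
      (G.deleteEdges (↑S : Set (Sym2 V))).Reachable s a →
      (G.deleteEdges (↑(bd G A) : Set (Sym2 V))).Reachable a b from
    h s u p (SimpleGraph.Reachable.refl s)
  intro a b p
  induction p with
  | nil => exact fun _ => SimpleGraph.Reachable.refl _
  | @cons a v w h _ ih =>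
    intro hra
    have hrv : (G.deleteEdges (↑S : Set (Sym2 V))).Reachable s v := hra.trans h.reachable
    have ha : a ∈ A := hK a hra
    have hv : v ∈ A := hK v hrv
    have hadj : (G.deleteEdges (↑(bd G A) : Set (Sym2 V))).Adj a v := by
      rw [SimpleGraph.deleteEdges_adj] at h ⊢
      refine ⟨h.1, fun hmem => ?_⟩
      obtain ⟨-, -, ⟨y, hy, hyA⟩⟩ := (mem_bd G).mp (Finset.mem_coe.mp hmem)
      rcases Sym2.mem_iff.mp hy with rfl | rfl
      · exact hyA ha
      · exact hyA hv
    exact hadj.reachable.trans (ih hrv)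

/-- The boundary of the `s`-component of `G - S` is contained in `S`. -/
lemma bd_comp_subset {s : V} (S : Finset (Sym2 V)) (K : Finset V)
    (hK : ∀ x, x ∈ K ↔ (G.deleteEdges (↑S : Set (Sym2 V))).Reachable s x) :
    bd G K ⊆ S := by
  intro e he
  obtain ⟨hef, ⟨x, hxe, hx⟩, ⟨y, hye, hy⟩⟩ := (mem_bd G).mp he
  by_contra heS
  have hxy : x ≠ y := fun h => hy (h ▸ hx)
  have hexy : e = s(x, y) := ((Sym2.mem_and_mem_iff hxy).mp ⟨hxe, hye⟩)
  have hadj : G.Adj x y := by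
    rw [hexy] at hef
    exact G.mem_edgeSet.mp (SimpleGraph.mem_edgeFinset.mp hef)
  have hadj' : (G.deleteEdges (↑S : Set (Sym2 V))).Adj x y := by
    rw [SimpleGraph.deleteEdges_adj]
    exact ⟨hadj, fun hc => heS (hexy ▸ Finset.mem_coe.mp hc)⟩
  exact hy ((hK y).mpr (((hK x).mp hx).trans hadj'.reachable))

end Aux

/-- Every important `s`–`t` separator has its `s`-side component containing the `s`-side
component of the unique inclusionwise-maximal minimum separator `S*`. -/
theorem impSep_contains_max_min_component {V : Type*} [Fintype V] [DecidableEq V]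
    (G : SimpleGraph V) [DecidableRel G.Adj] (s t : V) (lam : ℕ)
    (hlam : IsLeast {n : ℕ | ∃ S : Finset (Sym2 V),
        S ⊆ G.edgeFinset ∧ IsSeparator G s t S ∧ S.card = n} lam)
    (Sstar : Finset (Sym2 V))
    (hsub : Sstar ⊆ G.edgeFinset) (hsep : IsSeparator G s t Sstar)
    (hcard : Sstar.card = lam)
    (hmax : ∀ S : Finset (Sym2 V), S ⊆ G.edgeFinset → IsSeparator G s t S → S.card = lam →
        sComp G s S ⊆ sComp G s Sstar) :
    ∀ S : Finset (Sym2 V), IsImpSep G s t S → sComp G s Sstar ⊆ sComp G s S := by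
  classical
  intro S hS
  obtain ⟨hSsub, hSsep, hmin, himp⟩ := hS
  set K : Finset V := (sComp G s S).toFinset with hKdef
  set Kst : Finset V := (sComp G s Sstar).toFinset with hKstdef
  have hKmem : ∀ x, x ∈ K ↔ (G.deleteEdges (↑S : Set (Sym2 V))).Reachable s x :=
    fun x => Set.mem_toFinset
  have hKstmem : ∀ x, x ∈ Kst ↔ (G.deleteEdges (↑Sstar : Set (Sym2 V))).Reachable s x :=
    fun x => Set.mem_toFinset
  have hsK : s ∈ K := (hKmem s).mpr (SimpleGraph.Reachable.refl s)
  have hsKst : s ∈ Kst := (hKstmem s).mpr (SimpleGraph.Reachable.refl s)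
  have htK : t ∉ K := fun h => hSsep ((hKmem t).mp h)
  have htKst : t ∉ Kst := fun h => hsep ((hKstmem t).mp h)
  -- boundaries are contained in the separators
  have hbdK : bd G K ⊆ S := bd_comp_subset G S K hKmem
  have hbdKst : bd G Kst ⊆ Sstar := bd_comp_subset G Sstar Kst hKstmem
  have c1 : (bd G K).card ≤ S.card := Finset.card_le_card hbdK
  have c2 : (bd G Kst).card ≤ lam := hcard ▸ Finset.card_le_card hbdKst
  -- the boundary of the intersection is a separator, so has ≥ lam edges
  have hsint : s ∈ K ∩ Kst := Finset.mem_inter.mpr ⟨hsK, hsKst⟩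
  have htint : t ∉ K ∩ Kst := fun h => htK (Finset.mem_inter.mp h).1
  have c3 : lam ≤ (bd G (K ∩ Kst)).card :=
    hlam.2 ⟨bd G (K ∩ Kst), bd_subset_edgeFinset G _,
      bd_isSeparator G _ hsint htint, rfl⟩
  have hsm := bd_submodular G K Kst
  -- the candidate bigger separator
  set T : Finset (Sym2 V) := bd G (K ∪ Kst) with hTdef
  have hTcard : T.card ≤ S.card := by omega
  have hTsub : T ⊆ G.edgeFinset := bd_subset_edgeFinset G _
  have hTsep : IsSeparator G s t T :=
    bd_isSeparator G _ (Finset.mem_union_left _ hsK)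
      (fun h => (Finset.mem_union.mp h).elim htK htKst)
  have htr1 : sComp G s S ⊆ sComp G s T :=
    reach_transfer G S (K ∪ Kst)
      (fun x hx => Finset.mem_union_left _ ((hKmem x).mpr hx))
  have htr2 : sComp G s Sstar ⊆ sComp G s T :=
    reach_transfer G Sstar (K ∪ Kst)
      (fun x hx => Finset.mem_union_right _ ((hKstmem x).mpr hx))
  intro u hu
  by_contra hnot
  exact himp ⟨T, hTsub, hTsep, hTcard,
    Set.ssubset_def ▸ ⟨htr1, fun hc => hnot (hc (htr2 hu))⟩⟩
end

section
/- Let s, t be two vertices of a finite graph G and let 𝒮 be the set of all important s–t separators. Then ∑_{S ∈ 𝒮} 4^{−|S|} ≤ 1. In particular, the number of important s–t separators of size at most k is at most 4^k. -/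
open Finset
set_option linter.unusedSectionVars false
set_option linter.unusedVariables false

namespace ImpSepAux

open SimpleGraph
open scoped Classical

variable {V : Type*} [Fintype V] [DecidableEq V]

/-- The edge set of `G` as a `Finset` (classical). -/
noncomputable def edges (G : SimpleGraph V) : Finset (Sym2 V) := G.edgeSet.toFinset

@[simp] lemma mem_edges {G : SimpleGraph V} {e : Sym2 V} : e ∈ edges G ↔ e ∈ G.edgeSet := by
  simp [edges]

/-- The set of vertices reachable from the source set `X` after deleting `S`. -/
def xComp (G : SimpleGraph V) (X : Finset V) (S : Finset (Sym2 V)) : Set V :=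
  {u | ∃ x ∈ X, (G.deleteEdges (↑S : Set (Sym2 V))).Reachable x u}

/-- `S` separates the source set `X` from `t`. -/
def XSep (G : SimpleGraph V) (X : Finset V) (t : V) (S : Finset (Sym2 V)) : Prop :=
  t ∉ xComp G X S

/-- `S` is an important `X`–`t` separator. -/
def XImp (G : SimpleGraph V) (X : Finset V) (t : V) (S : Finset (Sym2 V)) : Prop :=
  S ⊆ edges G ∧ XSep G X t S ∧ (∀ S' : Finset (Sym2 V), S' ⊂ S → ¬ XSep G X t S') ∧
  ¬ ∃ S' : Finset (Sym2 V), S' ⊆ edges G ∧ XSep G X t S' ∧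
      S'.card ≤ S.card ∧ xComp G X S ⊂ xComp G X S'

/-- The edges of `G` crossing the vertex set `K`. -/
noncomputable def cutF (G : SimpleGraph V) (K : Set V) : Finset (Sym2 V) :=
  (edges G).filter (fun e => (∃ a ∈ e, a ∈ K) ∧ (∃ b ∈ e, b ∉ K))

/-- Minimum size of an `X`–`t` separator. -/
noncomputable def lam (G : SimpleGraph V) (X : Finset V) (t : V) : ℕ :=
  sInf {k | ∃ S : Finset (Sym2 V), S ⊆ edges G ∧ XSep G X t S ∧ S.card = k}

lemma X_subset_comp {G : SimpleGraph V} {X : Finset V} {S : Finset (Sym2 V)} :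
    (↑X : Set V) ⊆ xComp G X S := fun x hx => ⟨x, hx, Reachable.refl _⟩

lemma comp_trans {G : SimpleGraph V} {X : Finset V} {S : Finset (Sym2 V)} {a w : V}
    (ha : a ∈ xComp G X S) (h : (G.deleteEdges (↑S : Set (Sym2 V))).Reachable a w) :
    w ∈ xComp G X S := by
  obtain ⟨x, hx, hr⟩ := ha
  exact ⟨x, hx, hr.trans h⟩

lemma comp_closed {G : SimpleGraph V} {X : Finset V} {S : Finset (Sym2 V)} {a b : V}
    (ha : a ∈ xComp G X S) (h : (G.deleteEdges (↑S : Set (Sym2 V))).Adj a b) :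
    b ∈ xComp G X S := comp_trans ha h.reachable

lemma comp_mono_X {G : SimpleGraph V} {X Y : Finset V} {S : Finset (Sym2 V)} (h : X ⊆ Y) :
    xComp G X S ⊆ xComp G Y S := fun w ⟨x, hx, hr⟩ => ⟨x, h hx, hr⟩

/-- Transport reachability along a walk that stays in a closed set `T`. -/
lemma reach_transport {H H' : SimpleGraph V} {T : Set V}
    (hcl : ∀ a b, a ∈ T → H.Adj a b → b ∈ T)
    (hadj : ∀ a b, a ∈ T → b ∈ T → H.Adj a b → H'.Adj a b) :
    ∀ {x w : V}, H.Walk x w → x ∈ T → H'.Reachable x w ∧ w ∈ T := by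
  intro x w p
  induction p with
  | nil => exact fun hx => ⟨Reachable.refl _, hx⟩
  | cons hab p ih =>
      intro hx
      have hb := hcl _ _ hx hab
      obtain ⟨hr, hw⟩ := ih hb
      exact ⟨((hadj _ _ hx hb hab).reachable).trans hr, hw⟩

lemma reach_stays {H : SimpleGraph V} {T : Set V}
    (hcl : ∀ a b, a ∈ T → H.Adj a b → b ∈ T)
    {x w : V} (hx : x ∈ T) (h : H.Reachable x w) : w ∈ T := by
  obtain ⟨p⟩ := h
  exact (reach_transport hcl (fun a b _ _ h => h) p hx).2

lemma cut_comp_subset {G : SimpleGraph V} {X : Finset V} {S : Finset (Sym2 V)} :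
    cutF G (xComp G X S) ⊆ S := by
  intro e he
  induction e using Sym2.ind with
  | _ x y =>
    simp only [cutF, Finset.mem_filter, mem_edges, mem_edgeSet, Sym2.mem_iff] at he
    obtain ⟨hadj, ⟨a, ha, haK⟩, ⟨b, hb, hbK⟩⟩ := he
    by_contra hne
    have hdel : (G.deleteEdges (↑S : Set (Sym2 V))).Adj x y := by
      rw [deleteEdges_adj]
      exact ⟨hadj, by simpa using hne⟩
    rcases ha with rfl | rfl <;> rcases hb with rfl | rfl
    · exact hbK haK
    · exact hbK (comp_closed haK hdel)
    · exact hbK (comp_closed haK hdel.symm)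
    · exact hbK haK

lemma comp_cut_subset {G : SimpleGraph V} {X : Finset V} {K : Set V}
    (hX : (↑X : Set V) ⊆ K) : xComp G X (cutF G K) ⊆ K := by
  rintro w ⟨x, hx, hr⟩
  refine reach_stays (fun a b ha hab => ?_) (hX hx) hr
  rw [deleteEdges_adj] at hab
  by_contra hb
  exact hab.2 (by
    simp only [Finset.mem_coe, cutF, Finset.mem_filter, mem_edges, mem_edgeSet, Sym2.mem_iff]
    exact ⟨hab.1, ⟨a, Or.inl rfl, ha⟩, ⟨b, Or.inr rfl, hb⟩⟩)

/-- Reachability inside a component survives when we pass to the cut of a superset `K`. -/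
lemma reach_cut_of_reach {G : SimpleGraph V} {X : Finset V} {S : Finset (Sym2 V)} {K : Set V}
    (hK : xComp G X S ⊆ K) {x w : V} (hx : x ∈ xComp G X S)
    (hr : (G.deleteEdges (↑S : Set (Sym2 V))).Reachable x w) :
    (G.deleteEdges (↑(cutF G K) : Set (Sym2 V))).Reachable x w := by
  obtain ⟨p⟩ := hr
  refine (reach_transport (fun a b ha hab => comp_closed ha hab)
    (fun a b ha hb hab => ?_) p hx).1
  rw [deleteEdges_adj] at hab ⊢
  refine ⟨hab.1, ?_⟩
  simp only [Finset.mem_coe, cutF, Finset.mem_filter, Sym2.mem_iff]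
  rintro ⟨-, -, ⟨c, hc, hcK⟩⟩
  rcases hc with rfl | rfl
  · exact hcK (hK ha)
  · exact hcK (hK hb)


/-- Submodularity of the cut function. -/
lemma cut_submod (G : SimpleGraph V) (A B : Set V) :
    (cutF G (A ∪ B)).card + (cutF G (A ∩ B)).card ≤ (cutF G A).card + (cutF G B).card := by
  simp only [cutF, Finset.card_filter]
  rw [← Finset.sum_add_distrib, ← Finset.sum_add_distrib]
  refine Finset.sum_le_sum (fun e he => ?_)
  induction e using Sym2.ind with
  | _ x y =>
    simp only [Sym2.mem_iff, Set.mem_union, Set.mem_inter_iff]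
    by_cases hxa : x ∈ A <;> by_cases hxb : x ∈ B <;>
      by_cases hya : y ∈ A <;> by_cases hyb : y ∈ B <;>
      simp [hxa, hxb, hya, hyb]

lemma cut_subset_edges {G : SimpleGraph V} {K : Set V} : cutF G K ⊆ edges G :=
  Finset.filter_subset _ _

lemma lam_le {G : SimpleGraph V} {X : Finset V} {t : V} {S : Finset (Sym2 V)}
    (hE : S ⊆ edges G) (hsep : XSep G X t S) : lam G X t ≤ S.card :=
  Nat.sInf_le ⟨S, hE, hsep, rfl⟩

lemma exists_lam {G : SimpleGraph V} {X : Finset V} {t : V}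
    (hne : ∃ S, S ⊆ edges G ∧ XSep G X t S) :
    ∃ S, S ⊆ edges G ∧ XSep G X t S ∧ S.card = lam G X t := by
  obtain ⟨S, h1, h2⟩ := hne
  have := Nat.sInf_mem (s := {k | ∃ S : Finset (Sym2 V), S ⊆ edges G ∧ XSep G X t S ∧ S.card = k})
    ⟨S.card, S, h1, h2, rfl⟩
  exact this

/-- Deleting the whole edge set gives the empty graph. -/
lemma del_edges_eq_bot (G : SimpleGraph V) :
    G.deleteEdges (↑(edges G) : Set (Sym2 V)) = ⊥ := by
  ext a b
  simp [deleteEdges_adj]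

lemma edges_sep {G : SimpleGraph V} {X : Finset V} {t : V} (ht : t ∉ X) :
    XSep G X t (edges G) := by
  rintro ⟨x, hx, hr⟩
  rw [del_edges_eq_bot, reachable_bot] at hr
  exact ht (hr ▸ hx)

lemma sep_nonempty {G : SimpleGraph V} {X : Finset V} {t : V} (ht : t ∉ X) :
    ∃ S, S ⊆ edges G ∧ XSep G X t S :=
  ⟨edges G, le_refl _, edges_sep ht⟩

lemma not_mem_X_of_sep {G : SimpleGraph V} {X : Finset V} {t : V}
    (hne : ∃ S, S ⊆ edges G ∧ XSep G X t S) : t ∉ X := by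
  rintro ht
  obtain ⟨S, -, hsep⟩ := hne
  exact hsep (X_subset_comp ht)

lemma lam_le_card_edges {G : SimpleGraph V} {X : Finset V} {t : V} (ht : t ∉ X) :
    lam G X t ≤ (edges G).card := lam_le (le_refl _) (edges_sep ht)

/-- Deleting an extra edge first. -/
lemma del_insert (G : SimpleGraph V) (e : Sym2 V) (S : Finset (Sym2 V)) :
    (G.deleteEdges {e}).deleteEdges (↑S : Set (Sym2 V))
      = G.deleteEdges (↑(insert e S) : Set (Sym2 V)) := by
  ext a b
  simp only [deleteEdges_adj, Set.mem_singleton_iff, Finset.coe_insert, Set.mem_insert_iff,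
    Finset.mem_coe]
  tauto

lemma comp_del_insert (G : SimpleGraph V) (e : Sym2 V) (X : Finset V) (S : Finset (Sym2 V)) :
    xComp (G.deleteEdges {e}) X S = xComp G X (insert e S) := by
  unfold xComp
  rw [del_insert]

lemma edges_delete {G : SimpleGraph V} {e : Sym2 V} :
    edges (G.deleteEdges {e}) = (edges G).erase e := by
  ext a
  simp only [mem_edges, edgeSet_deleteEdges, Set.mem_diff, Set.mem_singleton_iff,
    Finset.mem_erase]
  tauto


/-- Pushing lemma: the `s`-side of any minimum separator is contained in the `s`-side of
any important separator. -/
lemma pushing {G : SimpleGraph V} {X : Finset V} {t : V} {S C : Finset (Sym2 V)}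
    (hS : XImp G X t S) (hCE : C ⊆ edges G) (hCsep : XSep G X t C)
    (hCcard : C.card = lam G X t) : xComp G X C ⊆ xComp G X S := by
  classical
  set A := xComp G X S with hA
  set B := xComp G X C with hB
  intro b hbB
  by_contra hbA
  -- construct a violating separator `cutF G (A ∪ B)`
  set D := cutF G (A ∪ B) with hD
  have hXA : (↑X : Set V) ⊆ A := X_subset_comp
  have hXB : (↑X : Set V) ⊆ B := X_subset_comp
  have hsub : (cutF G (A ∪ B)).card + (cutF G (A ∩ B)).card
      ≤ (cutF G A).card + (cutF G B).card := cut_submod G A B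
  have h1 : (cutF G A).card ≤ S.card := Finset.card_le_card cut_comp_subset
  have h2 : (cutF G B).card ≤ lam G X t := hCcard ▸ Finset.card_le_card cut_comp_subset
  -- the cut of the intersection is a separator
  have hintX : (↑X : Set V) ⊆ A ∩ B := fun x hx => ⟨hXA hx, hXB hx⟩
  have hintsep : XSep G X t (cutF G (A ∩ B)) := by
    intro ht
    exact hS.2.1 (comp_cut_subset hintX ht).1
  have h3 : lam G X t ≤ (cutF G (A ∩ B)).card := lam_le cut_subset_edges hintsep
  have hDcard : D.card ≤ S.card := by rw [hD]; omega
  -- `xComp G X D` contains `A` and `B`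
  have hAD : A ⊆ xComp G X D := by
    rintro w ⟨x, hx, hr⟩
    exact ⟨x, hx, reach_cut_of_reach (K := A ∪ B) (Set.subset_union_left) ⟨x, hx, .refl _⟩ hr⟩
  have hBD : B ⊆ xComp G X D := by
    rintro w ⟨x, hx, hr⟩
    exact ⟨x, hx, reach_cut_of_reach (K := A ∪ B) (Set.subset_union_right) ⟨x, hx, .refl _⟩ hr⟩
  have hDK : xComp G X D ⊆ A ∪ B := comp_cut_subset (fun x hx => Or.inl (hXA hx))
  have hDsep : XSep G X t D := by
    intro ht
    rcases hDK ht with h | h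
    · exact hS.2.1 h
    · exact hCsep h
  refine hS.2.2.2 ⟨D, cut_subset_edges, hDsep, hDcard, ?_⟩
  exact ⟨hAD, fun hcon => hbA (hcon (hBD hbB))⟩

/-- Extending the source set across a vertex already in the `s`-side preserves importance. -/
lemma comp_insert_eq {G : SimpleGraph V} {X : Finset V} {S : Finset (Sym2 V)} {v : V}
    (hv : v ∈ xComp G X S) : xComp G (insert v X) S = xComp G X S := by
  apply Set.Subset.antisymm
  · rintro w ⟨x, hx, hr⟩
    rcases Finset.mem_insert.1 hx with rfl | hx'
    · exact comp_trans hv hr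
    · exact ⟨x, hx', hr⟩
  · exact comp_mono_X (Finset.subset_insert _ _)

lemma imp_extend {G : SimpleGraph V} {X : Finset V} {t : V} {S : Finset (Sym2 V)} {v : V}
    (hS : XImp G X t S) (hv : v ∈ xComp G X S) : XImp G (insert v X) t S := by
  classical
  set X' := insert v X with hX'
  have hcompeq : xComp G X' S = xComp G X S := comp_insert_eq hv
  refine ⟨hS.1, ?_, ?_, ?_⟩
  · show t ∉ xComp G X' S
    rw [hcompeq]; exact hS.2.1
  · intro S' hS' hsep
    exact hS.2.2.1 S' hS' (fun ht => hsep (comp_mono_X (Finset.subset_insert _ _) ht))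
  · rintro ⟨S'', hE, hsep, hcard, hss⟩
    rw [hcompeq] at hss
    set T := xComp G X' S'' with hT
    set D := cutF G T with hD
    have hDsub : D ⊆ S'' := cut_comp_subset
    have hX'T : (↑X' : Set V) ⊆ T := X_subset_comp
    have hXT : (↑X : Set V) ⊆ T := fun x hx => hX'T (Finset.mem_insert_of_mem hx)
    have hDT : xComp G X D ⊆ T := by
      have := comp_cut_subset (G := G) (X := X) (K := T) hXT
      exact this
    have hDsep : XSep G X t D := fun ht => hsep (hDT ht)
    -- xComp G X S ⊆ xComp G X D
    have hSsubT : xComp G X S ⊆ T := fun w hw => hss.1 hw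
    have hSD : xComp G X S ⊆ xComp G X D := by
      rintro w ⟨x, hx, hr⟩
      exact ⟨x, hx, reach_cut_of_reach hSsubT ⟨x, hx, .refl _⟩ hr⟩
    -- every vertex of T is in xComp G X D
    have hTD : T ⊆ xComp G X D := by
      rintro w ⟨x', hx', hr⟩
      have hreach : (G.deleteEdges (↑D : Set (Sym2 V))).Reachable x' w :=
        reach_cut_of_reach (K := T) (le_refl _) ⟨x', hx', .refl _⟩ hr
      rcases Finset.mem_insert.1 hx' with rfl | hx''
      · exact comp_trans (hSD hv) hreach
      · exact ⟨x', hx'', hreach⟩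
    obtain ⟨w, hwT, hwS⟩ := Set.exists_of_ssubset hss
    refine hS.2.2.2 ⟨D, cut_subset_edges, hDsep,
      le_trans (Finset.card_le_card hDsub) hcard, hSD, ?_⟩
    intro hcon
    exact hwS (hcon (hTD hwT))

/-- Branch A: deleting an edge of an important separator. -/
lemma imp_delete {G : SimpleGraph V} {X : Finset V} {t : V} {S : Finset (Sym2 V)} {e : Sym2 V}
    (hS : XImp G X t S) (he : e ∈ S) :
    XImp (G.deleteEdges {e}) X t (S.erase e) := by
  classical
  have hins : insert e (S.erase e) = S := Finset.insert_erase he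
  refine ⟨?_, ?_, ?_, ?_⟩
  · intro a ha
    rw [edges_delete, Finset.mem_erase]
    exact ⟨Finset.ne_of_mem_erase ha, hS.1 (Finset.mem_of_mem_erase ha)⟩
  · show t ∉ xComp (G.deleteEdges {e}) X (S.erase e)
    rw [comp_del_insert, hins]
    exact hS.2.1
  · intro S' hS' hsep
    have hsub : insert e S' ⊂ S := by
      rw [Finset.ssubset_def] at hS' ⊢
      constructor
      · exact Finset.insert_subset he (hS'.1.trans (Finset.erase_subset _ _))
      · intro hcon
        refine hS'.2 (fun a ha => ?_)
        rcases Finset.mem_insert.1 (hcon (Finset.mem_of_mem_erase ha)) with rfl | h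
        · exact absurd rfl (Finset.ne_of_mem_erase ha)
        · exact h
    refine hS.2.2.1 _ hsub ?_
    show t ∉ xComp G X (insert e S')
    rw [← comp_del_insert]
    exact hsep
  · rintro ⟨S'', hE, hsep, hcard, hss⟩
    have heS'' : e ∉ S'' := by
      intro hcon
      have := hE hcon
      rw [edges_delete, Finset.mem_erase] at this
      exact this.1 rfl
    have hScard : S.card = (S.erase e).card + 1 := (Finset.card_erase_add_one he).symm
    refine hS.2.2.2 ⟨insert e S'', ?_, ?_, ?_, ?_⟩
    · refine Finset.insert_subset (by simpa using hS.1 he) (fun a ha => ?_)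
      have := hE ha
      rw [edges_delete] at this
      exact Finset.mem_of_mem_erase this
    · show t ∉ xComp G X (insert e S'')
      rw [← comp_del_insert]
      exact hsep
    · rw [Finset.card_insert_of_notMem heS'']
      omega
    · rw [← hins, ← comp_del_insert, ← comp_del_insert]
      exact hss


/-- Adding a vertex just beyond the farthest minimum cut to the source set increases the
minimum cut size. -/
lemma lam_insert {G : SimpleGraph V} {X : Finset V} {t : V} {Sm : Finset (Sym2 V)} {u v : V}
    (htX : t ∉ X)
    (hSmE : Sm ⊆ edges G) (hSmsep : XSep G X t Sm) (hSmcard : Sm.card = lam G X t)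
    (hmax : ∀ C : Finset (Sym2 V), C ⊆ edges G → XSep G X t C → C.card = lam G X t →
      (xComp G X C).ncard ≤ (xComp G X Sm).ncard)
    (huv : G.Adj u v) (hu : u ∈ xComp G X Sm) (hv : v ∉ xComp G X Sm) (hvt : v ≠ t) :
    lam G X t + 1 ≤ lam G (insert v X) t := by
  classical
  set X' := insert v X with hX'
  have htX' : t ∉ X' := by
    simp [hX', htX, Ne.symm hvt]
  obtain ⟨C, hCE, hCsep, hCcard⟩ := exists_lam (sep_nonempty (G := G) htX')
  set Ks := xComp G X Sm with hKs
  set T := xComp G X' C with hT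
  by_contra hcon
  push_neg at hcon
  have hlam' : lam G X' t ≤ lam G X t := by omega
  -- submodularity with K := Ks ∪ T
  have hsub := cut_submod G Ks T
  have h1 : (cutF G Ks).card ≤ lam G X t := hSmcard ▸ Finset.card_le_card cut_comp_subset
  have h2 : (cutF G T).card ≤ lam G X' t := hCcard ▸ Finset.card_le_card cut_comp_subset
  have hXKs : (↑X : Set V) ⊆ Ks := X_subset_comp
  have hXT : (↑X : Set V) ⊆ T := fun x hx => X_subset_comp (Finset.mem_insert_of_mem hx)
  have hintX : (↑X : Set V) ⊆ Ks ∩ T := fun x hx => ⟨hXKs hx, hXT hx⟩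
  have hintsep : XSep G X t (cutF G (Ks ∩ T)) := by
    intro ht
    exact hSmsep (comp_cut_subset hintX ht).1
  have h3 : lam G X t ≤ (cutF G (Ks ∩ T)).card := lam_le cut_subset_edges hintsep
  have hKcard : (cutF G (Ks ∪ T)).card ≤ lam G X t := by omega
  -- cutF G (Ks ∪ T) is an X-separator
  have hKsep : XSep G X t (cutF G (Ks ∪ T)) := by
    intro ht
    rcases comp_cut_subset (fun x hx => Or.inl (hXKs hx)) ht with h | h
    · exact hSmsep h
    · exact hCsep h
  have hKlam : (cutF G (Ks ∪ T)).card = lam G X t :=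
    le_antisymm hKcard (lam_le cut_subset_edges hKsep)
  -- but its component strictly contains Ks
  have hKsD : Ks ⊆ xComp G X (cutF G (Ks ∪ T)) := by
    rintro w ⟨x, hx, hr⟩
    exact ⟨x, hx, reach_cut_of_reach (K := Ks ∪ T) (Set.subset_union_left) ⟨x, hx, .refl _⟩ hr⟩
  have hvT : v ∈ T := X_subset_comp (Finset.mem_insert_self _ _)
  have hvD : v ∈ xComp G X (cutF G (Ks ∪ T)) := by
    refine comp_closed (hKsD hu) ?_
    rw [deleteEdges_adj]
    refine ⟨huv, ?_⟩
    simp only [Finset.mem_coe, cutF, Finset.mem_filter, Sym2.mem_iff]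
    rintro ⟨-, -, ⟨c, hc, hcK⟩⟩
    rcases hc with rfl | rfl
    · exact hcK (Or.inl hu)
    · exact hcK (Or.inr hvT)
  have hstrict : Ks ⊂ xComp G X (cutF G (Ks ∪ T)) :=
    ⟨hKsD, fun hcon2 => hv (hcon2 hvD)⟩
  have := hmax _ cut_subset_edges hKsep hKlam
  have hlt : Ks.ncard < (xComp G X (cutF G (Ks ∪ T))).ncard :=
    Set.ncard_lt_ncard hstrict (Set.toFinite _)
  omega


lemma key {n : ℕ}
    (ih : ∀ m < n, ∀ (G : SimpleGraph V) (X : Finset V) (t : V),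
      (∃ S, S ⊆ edges G ∧ XSep G X t S) → 2 * (edges G).card ≤ lam G X t + m →
      ∑ S ∈ (edges G).powerset.filter (XImp G X t), (4:ℝ)⁻¹ ^ S.card ≤ (2:ℝ)⁻¹ ^ lam G X t)
    {G : SimpleGraph V} {X : Finset V} {t : V}
    (htX : t ∉ X) (hl : lam G X t ≠ 0)
    (hmu : 2 * (edges G).card ≤ lam G X t + n)
    {Sm : Finset (Sym2 V)}
    (hSmE : Sm ⊆ edges G) (hSmsep : XSep G X t Sm) (hSmcard : Sm.card = lam G X t)
    (hmax : ∀ C : Finset (Sym2 V), C ⊆ edges G → XSep G X t C → C.card = lam G X t →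
      (xComp G X C).ncard ≤ (xComp G X Sm).ncard)
    {u v : V} (huv : G.Adj u v) (hu : u ∈ xComp G X Sm) (hv : v ∉ xComp G X Sm) :
    ∑ S ∈ (edges G).powerset.filter (XImp G X t), (4:ℝ)⁻¹ ^ S.card
      ≤ (2:ℝ)⁻¹ ^ lam G X t := by
  classical
  have hlamE : lam G X t ≤ (edges G).card := lam_le_card_edges htX
  have hn : 1 ≤ n := by
    by_contra hcon
    interval_cases n
    omega
  set e : Sym2 V := s(u, v) with hedef
  have he : e ∈ edges G := by rw [mem_edges]; exact (mem_edgeSet G).2 huv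
  set P := (edges G).powerset.filter (XImp G X t) with hP
  set PA := P.filter (fun S => e ∈ S) with hPA
  set PB := P.filter (fun S => e ∉ S) with hPB
  -- ====== Branch A ======
  set G₂ := G.deleteEdges {e} with hG₂
  have hE₂card : (edges G₂).card + 1 = (edges G).card := by
    rw [edges_delete]
    exact Finset.card_erase_add_one he
  have hne₂ : ∃ S, S ⊆ edges G₂ ∧ XSep G₂ X t S := sep_nonempty htX
  have hlam₂ : lam G X t ≤ lam G₂ X t + 1 := by
    obtain ⟨C₂, hC₂E, hC₂sep, hC₂card⟩ := exists_lam hne₂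
    have h1 : insert e C₂ ⊆ edges G := by
      refine Finset.insert_subset he (fun a ha => ?_)
      have := hC₂E ha
      rw [edges_delete] at this
      exact Finset.mem_of_mem_erase this
    have h2 : XSep G X t (insert e C₂) := by
      show t ∉ xComp G X (insert e C₂)
      rw [← comp_del_insert]
      exact hC₂sep
    calc lam G X t ≤ (insert e C₂).card := lam_le h1 h2
      _ ≤ C₂.card + 1 := Finset.card_insert_le _ _
      _ = lam G₂ X t + 1 := by rw [hC₂card]
  have hlam₂E : lam G₂ X t ≤ (edges G₂).card := lam_le_card_edges htX
  have ihA := ih (n - 1) (by omega) G₂ X t hne₂ (by omega)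
  have hAle : ∑ S ∈ PA, (4:ℝ)⁻¹ ^ S.card ≤ (2:ℝ)⁻¹ ^ (lam G X t + 1) := by
    have hstep : ∀ S ∈ PA, (4:ℝ)⁻¹ ^ S.card = 4⁻¹ * 4⁻¹ ^ (S.erase e).card := by
      intro S hS
      have he' : e ∈ S := (Finset.mem_filter.1 hS).2
      rw [← Finset.card_erase_add_one he', pow_succ]
      ring
    rw [Finset.sum_congr rfl hstep, ← Finset.mul_sum]
    have hinj : ∀ S ∈ PA, ∀ S' ∈ PA, S.erase e = S'.erase e → S = S' := by
      intro S hS S' hS' hh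
      have h1 : e ∈ S := (Finset.mem_filter.1 hS).2
      have h2 : e ∈ S' := (Finset.mem_filter.1 hS').2
      rw [← Finset.insert_erase h1, ← Finset.insert_erase h2, hh]
    have himg : ∑ S ∈ PA, (4:ℝ)⁻¹ ^ (S.erase e).card
        = ∑ T ∈ PA.image (fun S => S.erase e), (4:ℝ)⁻¹ ^ T.card :=
      (Finset.sum_image (f := fun T => (4:ℝ)⁻¹ ^ T.card) hinj).symm
    rw [himg]
    have hsubset : PA.image (fun S => S.erase e)
        ⊆ (edges G₂).powerset.filter (XImp G₂ X t) := by
      intro T hT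
      obtain ⟨S, hS, rfl⟩ := Finset.mem_image.1 hT
      obtain ⟨hS1, hS2⟩ := Finset.mem_filter.1 hS
      have himp := (Finset.mem_filter.1 hS1).2
      have hdel := imp_delete himp hS2
      exact Finset.mem_filter.2 ⟨Finset.mem_powerset.2 hdel.1, hdel⟩
    have hsum2 : ∑ T ∈ PA.image (fun S => S.erase e), (4:ℝ)⁻¹ ^ T.card
        ≤ (2:ℝ)⁻¹ ^ (lam G₂ X t) := by
      refine le_trans (Finset.sum_le_sum_of_subset_of_nonneg hsubset
        (fun i _ _ => by positivity)) ihA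
    have hpow : (2:ℝ)⁻¹ ^ (lam G₂ X t) ≤ (2:ℝ)⁻¹ ^ (lam G X t - 1) :=
      pow_le_pow_of_le_one (by norm_num) (by norm_num) (by omega)
    calc (4:ℝ)⁻¹ * ∑ T ∈ PA.image (fun S => S.erase e), (4:ℝ)⁻¹ ^ T.card
        ≤ 4⁻¹ * (2:ℝ)⁻¹ ^ (lam G X t - 1) := by
          refine mul_le_mul_of_nonneg_left (le_trans hsum2 hpow) (by norm_num)
      _ = (2:ℝ)⁻¹ ^ (lam G X t + 1) := by
          have hexp : lam G X t + 1 = (lam G X t - 1) + 2 := by omega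
          rw [hexp, pow_add]
          norm_num
          ring
  -- ====== Branch B ======
  have hvS : ∀ S ∈ PB, v ∈ xComp G X S := by
    intro S hS
    obtain ⟨hS1, hS2⟩ := Finset.mem_filter.1 hS
    have himp := (Finset.mem_filter.1 hS1).2
    have hpush := pushing himp hSmE hSmsep hSmcard
    refine comp_closed (hpush hu) ?_
    rw [deleteEdges_adj]
    exact ⟨huv, by simpa using hS2⟩
  have hBle : ∑ S ∈ PB, (4:ℝ)⁻¹ ^ S.card ≤ (2:ℝ)⁻¹ ^ (lam G X t + 1) := by
    by_cases hvt : v = t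
    · have hPBempty : PB = ∅ := by
        refine Finset.eq_empty_of_forall_notMem (fun S hS => ?_)
        have himp := (Finset.mem_filter.1 (Finset.mem_filter.1 hS).1).2
        exact himp.2.1 (hvt ▸ hvS S hS)
      rw [hPBempty]
      simp only [Finset.sum_empty]
      positivity
    · set X' := insert v X with hX'
      have htX' : t ∉ X' := by simp [hX', htX, Ne.symm hvt]
      have hne' : ∃ S, S ⊆ edges G ∧ XSep G X' t S := sep_nonempty htX'
      have hlam' : lam G X t + 1 ≤ lam G X' t :=
        lam_insert htX hSmE hSmsep hSmcard hmax huv hu hv hvt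
      have hlam'E : lam G X' t ≤ (edges G).card := lam_le_card_edges htX'
      have ihB := ih (n - 1) (by omega) G X' t hne' (by omega)
      have hsubset : PB ⊆ (edges G).powerset.filter (XImp G X' t) := by
        intro S hS
        obtain ⟨hS1, hS2⟩ := Finset.mem_filter.1 hS
        have himp := (Finset.mem_filter.1 hS1).2
        exact Finset.mem_filter.2 ⟨(Finset.mem_filter.1 hS1).1,
          imp_extend himp (hvS S hS)⟩
      refine le_trans (Finset.sum_le_sum_of_subset_of_nonneg hsubset
        (fun i _ _ => by positivity)) (le_trans ihB ?_)
      exact pow_le_pow_of_le_one (by norm_num) (by norm_num) hlam'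
  -- ====== combine ======
  have hsplit : ∑ S ∈ PA, (4:ℝ)⁻¹ ^ S.card + ∑ S ∈ PB, (4:ℝ)⁻¹ ^ S.card
      = ∑ S ∈ P, (4:ℝ)⁻¹ ^ S.card :=
    Finset.sum_filter_add_sum_filter_not P (fun S => e ∈ S) _
  rw [← hsplit]
  have hfinal : (2:ℝ)⁻¹ ^ (lam G X t + 1) + (2:ℝ)⁻¹ ^ (lam G X t + 1)
      = (2:ℝ)⁻¹ ^ lam G X t := by
    rw [pow_succ]
    ring
  linarith [hAle, hBle]


/-- Main bound: the sum of `4^{-|S|}` over important `X`–`t` separators is at most `2^{-λ}`. -/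
lemma main_bound : ∀ (n : ℕ) (G : SimpleGraph V) (X : Finset V) (t : V),
    (∃ S, S ⊆ edges G ∧ XSep G X t S) → 2 * (edges G).card ≤ lam G X t + n →
    ∑ S ∈ (edges G).powerset.filter (XImp G X t), (4:ℝ)⁻¹ ^ S.card
      ≤ (2:ℝ)⁻¹ ^ lam G X t := by
  intro n
  induction n using Nat.strong_induction_on with
  | _ n ih =>
  intro G X t hne hmu
  have htX := not_mem_X_of_sep hne
  by_cases hl : lam G X t = 0
  · -- base case: the empty set is a separator
    obtain ⟨C, hCE, hCsep, hCcard⟩ := exists_lam hne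
    rw [hl, Finset.card_eq_zero] at hCcard
    subst hCcard
    have hsubset : (edges G).powerset.filter (XImp G X t) ⊆ {∅} := by
      intro S hS
      rw [Finset.mem_singleton]
      by_contra hne'
      have himp := (Finset.mem_filter.1 hS).2
      exact himp.2.2.1 ∅
        (Finset.empty_ssubset.2 (Finset.nonempty_iff_ne_empty.2 hne')) hCsep
    have := Finset.sum_le_sum_of_subset_of_nonneg (f := fun S => (4:ℝ)⁻¹ ^ S.card) hsubset
      (fun i _ _ => by positivity)
    rw [hl]
    refine le_trans this ?_
    simp
  · -- main case
    have hlamE : lam G X t ≤ (edges G).card := lam_le_card_edges htX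
    set cand := ((edges G).powerset.filter (fun C => XSep G X t C ∧ C.card = lam G X t))
      with hcand
    have hcandne : cand.Nonempty := by
      obtain ⟨C, h1, h2, h3⟩ := exists_lam hne
      exact ⟨C, Finset.mem_filter.2 ⟨Finset.mem_powerset.2 h1, h2, h3⟩⟩
    obtain ⟨Sm, hSmmem, hmax0⟩ :=
      Finset.exists_max_image cand (fun C => (xComp G X C).ncard) hcandne
    rw [hcand, Finset.mem_filter, Finset.mem_powerset] at hSmmem
    have hSmE := hSmmem.1
    have hSmsep := hSmmem.2.1
    have hSmcard := hSmmem.2.2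
    have hmax : ∀ C : Finset (Sym2 V), C ⊆ edges G → XSep G X t C → C.card = lam G X t →
        (xComp G X C).ncard ≤ (xComp G X Sm).ncard := fun C h1 h2 h3 =>
      hmax0 C (Finset.mem_filter.2 ⟨Finset.mem_powerset.2 h1, h2, h3⟩)
    have hcut : (cutF G (xComp G X Sm)).Nonempty := by
      rw [Finset.nonempty_iff_ne_empty]
      intro hempty
      have hsep0 : XSep G X t ∅ := by
        intro ht
        have hcc := comp_cut_subset (G := G) (K := xComp G X Sm)
          (X_subset_comp (S := Sm))
        rw [hempty] at hcc
        exact hSmsep (hcc ht)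
      have := lam_le (Finset.empty_subset _) hsep0
      simp at this
      exact hl this
    obtain ⟨e, he⟩ := hcut
    revert he
    induction e using Sym2.ind with
    | _ x y =>
    intro he
    simp only [cutF, Finset.mem_filter, mem_edges, mem_edgeSet, Sym2.mem_iff] at he
    obtain ⟨hadj, ⟨a, ha, haK⟩, ⟨b, hb, hbK⟩⟩ := he
    rcases ha with rfl | rfl <;> rcases hb with rfl | rfl
    · exact absurd haK hbK
    · exact key ih htX hl hmu hSmE hSmsep hSmcard hmax hadj haK hbK
    · exact key ih htX hl hmu hSmE hSmsep hSmcard hmax hadj.symm haK hbK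
    · exact absurd haK hbK


lemma comp_singleton (G : SimpleGraph V) (s : V) (S : Finset (Sym2 V)) :
    xComp G {s} S = sComp G s S := by
  ext u
  simp [xComp, sComp]

lemma xsep_singleton (G : SimpleGraph V) (s t : V) (S : Finset (Sym2 V)) :
    XSep G {s} t S ↔ IsSeparator G s t S := by
  unfold XSep IsSeparator
  rw [comp_singleton]
  simp [sComp]

lemma edges_eq_edgeFinset (G : SimpleGraph V) [DecidableRel G.Adj] :
    edges G = G.edgeFinset := by
  ext e
  simp [mem_edges, SimpleGraph.mem_edgeFinset]

lemma ximp_singleton (G : SimpleGraph V) [DecidableRel G.Adj]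
    (s t : V) (S : Finset (Sym2 V)) :
    XImp G {s} t S ↔ IsImpSep G s t S := by
  unfold XImp IsImpSep
  simp only [edges_eq_edgeFinset, xsep_singleton, comp_singleton]

end ImpSepAux

open scoped Classical in
/-- The sum of `4^{-|S|}` over all important `s`–`t` separators is at most `1`; in
particular there are at most `4^k` important `s`–`t` separators of size at most `k`. -/
theorem impSep_sum_bound {V : Type*} [Fintype V] [DecidableEq V]
    (G : SimpleGraph V) [DecidableRel G.Adj] (s t : V) :
    (∑ S ∈ G.edgeFinset.powerset.filter (fun S => IsImpSep G s t S),
        ((4 : ℝ))⁻¹ ^ S.card) ≤ 1 ∧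
    ∀ k : ℕ,
      (G.edgeFinset.powerset.filter (fun S => IsImpSep G s t S ∧ S.card ≤ k)).card
        ≤ 4 ^ k := by
  classical
  open ImpSepAux in
  have hsets : (edges G).powerset.filter (XImp G {s} t)
      = G.edgeFinset.powerset.filter (fun S => IsImpSep G s t S) := by
    ext S
    simp only [Finset.mem_filter, Finset.mem_powerset, ImpSepAux.edges_eq_edgeFinset,
      ImpSepAux.ximp_singleton]
  have hsum : (∑ S ∈ G.edgeFinset.powerset.filter (fun S => IsImpSep G s t S),
      ((4 : ℝ))⁻¹ ^ S.card) ≤ 1 := by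
    by_cases hst : s = t
    · have hempty : G.edgeFinset.powerset.filter (fun S => IsImpSep G s t S) = ∅ := by
        refine Finset.eq_empty_of_forall_notMem (fun S hS => ?_)
        have himp := (Finset.mem_filter.1 hS).2
        exact himp.2.1 (hst ▸ SimpleGraph.Reachable.refl _)
      rw [hempty]
      simp
    · have htX : t ∉ ({s} : Finset V) := by
        simp [Ne.symm hst]
      have hne := ImpSepAux.sep_nonempty (G := G) htX
      have hmain := ImpSepAux.main_bound (2 * (ImpSepAux.edges G).card) G {s} t hne
        (by omega)
      rw [hsets] at hmain
      refine le_trans hmain ?_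
      exact pow_le_one₀ (by norm_num) (by norm_num)
  refine ⟨hsum, fun k => ?_⟩
  set Ak := G.edgeFinset.powerset.filter (fun S => IsImpSep G s t S ∧ S.card ≤ k) with hAk
  have hsub : Ak ⊆ G.edgeFinset.powerset.filter (fun S => IsImpSep G s t S) := by
    intro S hS
    obtain ⟨h1, h2, _⟩ := Finset.mem_filter.1 hS
    exact Finset.mem_filter.2 ⟨h1, h2⟩
  have h1 : (Ak.card : ℝ) * (4 : ℝ)⁻¹ ^ k ≤ 1 := by
    calc (Ak.card : ℝ) * (4 : ℝ)⁻¹ ^ k = ∑ S ∈ Ak, (4 : ℝ)⁻¹ ^ k := by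
          rw [Finset.sum_const, nsmul_eq_mul]
      _ ≤ ∑ S ∈ Ak, (4 : ℝ)⁻¹ ^ S.card := by
          refine Finset.sum_le_sum (fun S hS => ?_)
          have hle := (Finset.mem_filter.1 hS).2.2
          exact pow_le_pow_of_le_one (by norm_num) (by norm_num) hle
      _ ≤ ∑ S ∈ G.edgeFinset.powerset.filter (fun S => IsImpSep G s t S),
            (4 : ℝ)⁻¹ ^ S.card :=
          Finset.sum_le_sum_of_subset_of_nonneg hsub (fun i _ _ => by positivity)
      _ ≤ 1 := hsum
  have h2 : (Ak.card : ℝ) ≤ (4 : ℝ) ^ k := by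
    have h4 : (0 : ℝ) < (4 : ℝ)⁻¹ ^ k := by positivity
    calc (Ak.card : ℝ) = 1 / (4 : ℝ)⁻¹ ^ k * ((Ak.card : ℝ) * (4 : ℝ)⁻¹ ^ k) := by
          field_simp
      _ ≤ 1 / (4 : ℝ)⁻¹ ^ k * 1 := mul_le_mul_of_nonneg_left h1 (by positivity)
      _ = (4 : ℝ) ^ k := by rw [mul_one, one_div, ← inv_pow, inv_inv]
  have : ((Ak.card : ℕ) : ℝ) ≤ ((4 ^ k : ℕ) : ℝ) := by push_cast; exact h2
  exact_mod_cast this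
end

section
/- Let G be a finite graph, v a vertex, μ monotone, and let C be an inclusionwise minimal (μ,p,q)-cluster containing v. Then for every connected component X of G \ C, the set X is important: d(X) ≤ q, G[X] is connected, and there is no connected set Y ⊋ X with v ∉ Y and d(Y) ≤ d(X). -/
open Finset

/-- `X` is an important set with respect to `v`: `d(X) ≤ q`, `G[X]` is connected, and no
connected proper superset `Y` avoiding `v` has `d(Y) ≤ d(X)`. -/
def ImportantSet {V : Type*} [Fintype V] [DecidableEq V] (G : SimpleGraph V)
    [DecidableRel G.Adj] (v : V) (q : ℕ) (X : Finset V) : Prop :=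
  v ∉ X ∧ cutCard G X ≤ q ∧ (G.induce (X : Set V)).Connected ∧
  ¬ ∃ Y : Finset V, X ⊂ Y ∧ v ∉ Y ∧ (G.induce (Y : Set V)).Connected ∧
      cutCard G Y ≤ cutCard G X

lemma mem_cutSet {V : Type*} [Fintype V] [DecidableEq V] {G : SimpleGraph V}
    [DecidableRel G.Adj] {X : Finset V} {e : Sym2 V} :
    e ∈ cutSet G X ↔ ∃ a b, G.Adj a b ∧ a ∈ X ∧ b ∉ X ∧ e = s(a, b) := by
  simp only [cutSet, mem_filter, SimpleGraph.mem_edgeFinset, mem_univ, true_and,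
    exists_and_left]
  constructor
  · rintro ⟨he, a, b, rfl, ha, hb⟩
    exact ⟨a, b, he, ha, hb, rfl⟩
  · rintro ⟨a, b, hadj, ha, hb, rfl⟩
    exact ⟨hadj, a, b, rfl, ha, hb⟩

lemma walk_cross {V : Type*} [Fintype V] [DecidableEq V] {G : SimpleGraph V}
    {Y X : Finset V} :
    ∀ {u w : (Y : Set V)}, (G.induce (Y : Set V)).Walk u w → (u : V) ∈ X → (w : V) ∉ X →
      ∃ a ∈ X, ∃ b ∈ Y, b ∉ X ∧ G.Adj a b := by
  intro u w p
  induction p with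
  | nil => intro h h'; exact absurd h h'
  | @cons u z w h p ih =>
    intro hu hw
    by_cases hz : (z : V) ∈ X
    · exact ih hz hw
    · exact ⟨u, hu, z, z.2, hz, h⟩

lemma exists_crossing {V : Type*} [Fintype V] [DecidableEq V] {G : SimpleGraph V}
    {Y X : Finset V} (hconn : (G.induce (Y : Set V)).Connected) (hXY : X ⊆ Y)
    (hXne : X.Nonempty) (hne : (Y \ X).Nonempty) :
    ∃ a ∈ X, ∃ b ∈ Y, b ∉ X ∧ G.Adj a b := by
  obtain ⟨x, hx⟩ := hXne
  obtain ⟨y, hy⟩ := hne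
  rw [mem_sdiff] at hy
  obtain ⟨p⟩ := hconn.preconnected ⟨x, by exact_mod_cast hXY hx⟩ ⟨y, by exact_mod_cast hy.1⟩
  exact walk_cross p hx hy.2

/-- Every connected component of `G \ C`, for an inclusionwise minimal `(μ,p,q)`-cluster `C`
containing `v`, is an important set. -/
theorem component_of_minimal_cluster_important {V : Type*} [Fintype V] [DecidableEq V]
    (G : SimpleGraph V) [DecidableRel G.Adj] (μ : Finset V → ℕ)
    (hmono : ∀ X Y : Finset V, X ⊆ Y → μ X ≤ μ Y) (p q : ℕ) (v : V)
    (C : Finset V) (hvC : v ∈ C)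
    (hclus : μ C ≤ p ∧ cutCard G C ≤ q)
    (hmin : ∀ C' : Finset V, C' ⊂ C → v ∈ C' → ¬ (μ C' ≤ p ∧ cutCard G C' ≤ q))
    (X : Finset V) (hXne : X.Nonempty) (hXdisj : ∀ x ∈ X, x ∉ C)
    (hXconn : (G.induce (X : Set V)).Connected)
    (hXmax : ∀ a ∈ X, ∀ b : V, G.Adj a b → b ∉ C → b ∈ X) :
    ImportantSet G v q X := by
  -- X's cut is contained in C's cut
  have hBA : cutSet G X ⊆ cutSet G C := by
    intro e he
    obtain ⟨a, b, hadj, ha, hb, rfl⟩ := mem_cutSet.mp he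
    have hbC : b ∈ C := by
      by_contra hbC
      exact hb (hXmax a ha b hadj hbC)
    exact mem_cutSet.mpr ⟨b, a, hadj.symm, hbC, hXdisj a ha, Sym2.eq_swap⟩
  have hdX : cutCard G X ≤ q :=
    le_trans (card_le_card hBA) hclus.2
  refine ⟨fun hvX => hXdisj v hvX hvC, hdX, hXconn, ?_⟩
  rintro ⟨Y, hXY, hvY, hYconn, hdY⟩
  -- find a vertex of C in Y
  obtain ⟨a, ha, b, hbY, hbX, hadj⟩ :=
    exists_crossing hYconn hXY.subset hXne (sdiff_nonempty.mpr fun h => hXY.not_subset h)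
  have hbC : b ∈ C := by
    by_contra hbC
    exact hbX (hXmax a ha b hadj hbC)
  -- the smaller cluster
  set C' : Finset V := C \ Y with hC'
  have hC'sub : C' ⊂ C := by
    refine (Finset.ssubset_iff_of_subset (sdiff_subset)).mpr ⟨b, hbC, ?_⟩
    simp [hC', hbY]
  have hvC' : v ∈ C' := mem_sdiff.mpr ⟨hvC, hvY⟩
  refine hmin C' hC'sub hvC' ⟨le_trans (hmono _ _ sdiff_subset) hclus.1, ?_⟩
  -- edge counting: cutSet C' ⊆ (cutSet C \ cutSet X) ∪ cutSet Y
  have hsub : cutSet G C' ⊆ (cutSet G C \ cutSet G X) ∪ cutSet G Y := by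
    intro e he
    obtain ⟨x, y, hadj', hx, hy, rfl⟩ := mem_cutSet.mp he
    rw [hC', mem_sdiff] at hx
    by_cases hyY : y ∈ Y
    · exact mem_union_right _ (mem_cutSet.mpr ⟨y, x, hadj'.symm, hyY, hx.2, Sym2.eq_swap⟩)
    · have hyC : y ∉ C := by
        intro hyC
        exact hy (mem_sdiff.mpr ⟨hyC, hyY⟩)
      refine mem_union_left _ (mem_sdiff.mpr ⟨mem_cutSet.mpr ⟨x, y, hadj', hx.1, hyC, rfl⟩, ?_⟩)
      intro heX
      obtain ⟨x', y', _, hx', hy', heq⟩ := mem_cutSet.mp heX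
      rw [Sym2.eq_iff] at heq
      rcases heq with ⟨rfl, rfl⟩ | ⟨rfl, rfl⟩
      · exact hXdisj x hx' hx.1
      · exact hyY (hXY.subset hx')
  -- count
  have h1 : (cutSet G C \ cutSet G X).card = cutCard G C - cutCard G X :=
    card_sdiff_of_subset hBA
  have h2 : cutCard G C' ≤ (cutSet G C \ cutSet G X).card + cutCard G Y :=
    le_trans (card_le_card hsub) (card_union_le _ _)
  have h3 : cutCard G X ≤ cutCard G C := card_le_card hBA
  have h4 : cutCard G C ≤ q := hclus.2
  unfold cutCard at *
  omega
end

section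
/- Let C be a set of vertices of a finite graph G with v ∉ C, and suppose Y ⊇ X for a component X of G \ C. Setting C' = C \ Y, we have Δ(C') ⊆ (Δ(C) \ Δ(X)) ∪ Δ(Y), and hence d(C') ≤ d(C) − d(X) + d(Y). -/
open Finset

lemma mem_cutSet_iff {V : Type*} [Fintype V] [DecidableEq V] (G : SimpleGraph V)
    [DecidableRel G.Adj] (X : Finset V) (e : Sym2 V) :
    e ∈ cutSet G X ↔ e ∈ G.edgeFinset ∧ ∃ a b, e = s(a, b) ∧ a ∈ X ∧ b ∉ X := by
  simp [cutSet]

/-- If `X` is a component of `G \ C` and `X ⊆ Y`, then for `C' = C \ Y` we have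
`Δ(C') ⊆ (Δ(C) \ Δ(X)) ∪ Δ(Y)`, and hence `d(C') ≤ d(C) − d(X) + d(Y)`. -/
theorem cut_of_diff_bound {V : Type*} [Fintype V] [DecidableEq V]
    (G : SimpleGraph V) [DecidableRel G.Adj] (v : V)
    (C : Finset V) (hvC : v ∉ C)
    (X : Finset V) (hXne : X.Nonempty) (hXdisj : ∀ x ∈ X, x ∉ C)
    (hXconn : (G.induce (X : Set V)).Connected)
    (hXmax : ∀ a ∈ X, ∀ b : V, G.Adj a b → b ∉ C → b ∈ X)
    (Y : Finset V) (hXY : X ⊆ Y) :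
    cutSet G (C \ Y) ⊆ (cutSet G C \ cutSet G X) ∪ cutSet G Y ∧
    cutCard G (C \ Y) ≤ cutCard G C - cutCard G X + cutCard G Y := by
  have hsub : cutSet G (C \ Y) ⊆ (cutSet G C \ cutSet G X) ∪ cutSet G Y := by
    intro e he
    rw [mem_cutSet_iff] at he
    obtain ⟨heE, a, b, rfl, ha, hb⟩ := he
    rw [mem_sdiff] at ha
    rw [mem_sdiff, not_and_or, not_not] at hb
    rcases hb with hb | hb
    · -- b ∉ C, so b ∉ Y would give edge in Δ(C)\Δ(X); if b ∈ Y, edge in Δ(Y)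
      by_cases hbY : b ∈ Y
      · refine mem_union_right _ ?_
        rw [mem_cutSet_iff]
        exact ⟨heE, b, a, Sym2.eq_swap, hbY, ha.2⟩
      · refine mem_union_left _ ?_
        rw [mem_sdiff, mem_cutSet_iff, mem_cutSet_iff]
        refine ⟨⟨heE, a, b, rfl, ha.1, hb⟩, ?_⟩
        rintro ⟨-, c, d, hcd, hc, hd⟩
        have haX : a ∉ X := fun h => hXdisj a h ha.1
        have hbX : b ∉ X := fun h => hbY (hXY h)
        rw [Sym2.eq_iff] at hcd
        rcases hcd with ⟨rfl, rfl⟩ | ⟨rfl, rfl⟩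
        · exact haX hc
        · exact hbX hc
    · refine mem_union_right _ ?_
      rw [mem_cutSet_iff]
      exact ⟨heE, b, a, Sym2.eq_swap, hb, ha.2⟩
  refine ⟨hsub, ?_⟩
  have hXC : cutSet G X ⊆ cutSet G C := by
    intro e he
    rw [mem_cutSet_iff] at he ⊢
    obtain ⟨heE, a, b, rfl, ha, hb⟩ := he
    have hadj : G.Adj a b := by
      rwa [SimpleGraph.mem_edgeFinset, SimpleGraph.mem_edgeSet] at heE
    have hbC : b ∈ C := by
      by_contra hbC
      exact hb (hXmax a ha b hadj hbC)
    exact ⟨heE, b, a, Sym2.eq_swap, hbC, hXdisj a ha⟩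
  calc cutCard G (C \ Y) ≤ ((cutSet G C \ cutSet G X) ∪ cutSet G Y).card :=
        card_le_card hsub
    _ ≤ (cutSet G C \ cutSet G X).card + (cutSet G Y).card := card_union_le _ _
    _ = cutCard G C - cutCard G X + cutCard G Y := by
        rw [card_sdiff_of_subset hXC]; rfl
end

section
/- In a finite simple graph G (no parallel edges), let C be a v-minimal set, i.e., v ∉ C and d(C' ∪ {v}) > d(C ∪ {v}) for every proper subset C' ⊂ C. Then the number of edges from C to V(G) \ (C ∪ {v}) is strictly less than the number of edges from C to v, which in turn is at most |C|. -/
open Finset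

/-- `C` is a `v`-minimal set: `C` is nonempty, `v ∉ C`, and every proper subset `C' ⊂ C`
satisfies `d(C' ∪ {v}) > d(C ∪ {v})`. -/
def VMinimal {V : Type*} [Fintype V] [DecidableEq V] (G : SimpleGraph V)
    [DecidableRel G.Adj] (v : V) (C : Finset V) : Prop :=
  C.Nonempty ∧ v ∉ C ∧
    ∀ C' : Finset V, C' ⊂ C → cutCard G (insert v C) < cutCard G (insert v C')

lemma cutCard_eq_pairs {V : Type*} [Fintype V] [DecidableEq V] (G : SimpleGraph V)
    [DecidableRel G.Adj] (X : Finset V) :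
    cutCard G X = ((X ×ˢ (univ \ X)).filter (fun p => G.Adj p.1 p.2)).card := by
  rw [cutCard]
  symm
  apply Finset.card_bij (fun p _ => s(p.1, p.2)) ?_ ?_ ?_
  · rintro ⟨a, b⟩ hp
    simp only [mem_filter, mem_product, mem_sdiff, mem_univ, true_and] at hp
    obtain ⟨⟨ha, hb⟩, hadj⟩ := hp
    simp only [cutSet, mem_filter, SimpleGraph.mem_edgeFinset, mem_univ, true_and]
    exact ⟨(SimpleGraph.mem_edgeSet G).mpr hadj, a, b, rfl, ha, hb⟩
  · rintro ⟨a, b⟩ hp ⟨a', b'⟩ hp' h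
    simp only [mem_filter, mem_product, mem_sdiff, mem_univ, true_and] at hp hp'
    rcases Sym2.eq_iff.mp h with ⟨h1, h2⟩ | ⟨h1, h2⟩
    · exact Prod.ext h1 h2
    · have h1' : a = b' := h1
      exact absurd (h1' ▸ hp.1.1) hp'.1.2
  · intro e he
    simp only [cutSet, mem_filter, SimpleGraph.mem_edgeFinset, mem_univ, true_and] at he
    obtain ⟨hedge, a, b, rfl, ha, hb⟩ := he
    refine ⟨(a, b), ?_, rfl⟩
    simp only [mem_filter, mem_product, mem_sdiff, mem_univ, true_and]
    exact ⟨⟨ha, hb⟩, (SimpleGraph.mem_edgeSet G).mp hedge⟩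

/-- For a `v`-minimal set `C` in a simple graph, the number of edges from `C` to
`V(G) \ (C ∪ {v})` is strictly less than the number of edges from `C` to `v`, which is at
most `|C|`. -/
theorem vMinimal_cut_bounds {V : Type*} [Fintype V] [DecidableEq V]
    (G : SimpleGraph V) [DecidableRel G.Adj] (v : V) (C : Finset V)
    (hC : VMinimal G v C) :
    ((C ×ˢ (univ \ insert v C)).filter (fun p => G.Adj p.1 p.2)).card
        < (C.filter (fun u => G.Adj u v)).card ∧
    (C.filter (fun u => G.Adj u v)).card ≤ C.card := by
  obtain ⟨hne, hv, hmin⟩ := hC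
  refine ⟨?_, Finset.card_filter_le _ _⟩
  have key := hmin ∅ (Finset.empty_ssubset.mpr hne)
  rw [Finset.insert_empty, cutCard_eq_pairs, cutCard_eq_pairs] at key
  -- decompose cutCard (insert v C)
  have hdisj : Disjoint ({v} ×ˢ (univ \ insert v C)) (C ×ˢ (univ \ insert v C)) := by
    rw [Finset.disjoint_left]
    rintro ⟨a, b⟩ h1 h2
    simp only [mem_product, mem_singleton] at h1 h2
    exact hv (h1.1 ▸ h2.1)
  have hsplit : (insert v C) ×ˢ (univ \ insert v C) =
      {v} ×ˢ (univ \ insert v C) ∪ C ×ˢ (univ \ insert v C) := by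
    rw [Finset.insert_eq, Finset.union_product]
  rw [hsplit, Finset.filter_union, Finset.card_union_of_disjoint
    (Finset.disjoint_filter_filter hdisj)] at key
  -- decompose cutCard {v}
  have hsplit2 : (univ \ ({v} : Finset V)) = (univ \ insert v C) ∪ C := by
    ext x
    simp only [mem_sdiff, mem_univ, true_and, mem_union, mem_singleton, mem_insert]
    constructor
    · intro hx
      by_cases hxC : x ∈ C
      · exact Or.inr hxC
      · exact Or.inl (by tauto)
    · rintro (⟨h1⟩ | h)
      · tauto
      · exact fun h' => hv (h' ▸ h)
  have hdisj2 : Disjoint (univ \ insert v C) C := by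
    rw [Finset.disjoint_left]
    intro x hx hxC
    simp only [mem_sdiff, mem_insert] at hx
    exact hx.2 (Or.inr hxC)
  have hsingle : ∀ B : Finset V, (({v} : Finset V) ×ˢ B).filter (fun p => G.Adj p.1 p.2)
      = ({v} ×ˢ B.filter (fun b => G.Adj v b)) := by
    intro B
    ext ⟨a, b⟩
    simp only [mem_filter, mem_product, mem_singleton]
    constructor
    · rintro ⟨⟨rfl, hb⟩, hadj⟩; exact ⟨rfl, hb, hadj⟩
    · rintro ⟨rfl, hb, hadj⟩; exact ⟨⟨rfl, hb⟩, hadj⟩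
  rw [hsplit2] at key
  have hBsplit : (((( {v} : Finset V)) ×ˢ ((univ \ insert v C) ∪ C)).filter
      (fun p => G.Adj p.1 p.2)).card
      = ((univ \ insert v C).filter (fun b => G.Adj v b)).card
        + (C.filter (fun b => G.Adj v b)).card := by
    rw [hsingle, Finset.singleton_product, Finset.card_map, Finset.filter_union,
      Finset.card_union_of_disjoint (Finset.disjoint_filter_filter hdisj2)]
  rw [hBsplit, hsingle, Finset.singleton_product, Finset.card_map] at key
  have hcomm : (C.filter (fun b => G.Adj v b)) = (C.filter (fun u => G.Adj u v)) := by
    apply Finset.filter_congr; intro x _; simp [SimpleGraph.adj_comm]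
  rw [hcomm] at key
  omega
end

section
/- Every v-minimal set C in a finite simple graph contains a vertex u such that N[u] ⊆ C ∪ {v}, i.e., all neighbors of u lie in C ∪ {v}. -/
open Finset

/-- Every `v`-minimal set `C` contains a vertex `u` all of whose neighbors lie in
`C ∪ {v}`. -/
theorem vMinimal_has_interior_vertex {V : Type*} [Fintype V] [DecidableEq V]
    (G : SimpleGraph V) [DecidableRel G.Adj] (v : V) (C : Finset V)
    (hC : VMinimal G v C) :
    ∃ u ∈ C, ∀ w : V, G.Adj u w → w ∈ C ∨ w = v := by
  obtain ⟨hne, hv, hmin⟩ := hC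
  by_contra h
  push_neg at h
  have h' : ∀ u : V, ∃ w : V, u ∈ C → G.Adj u w ∧ w ∉ C ∧ w ≠ v := by
    intro u
    by_cases hu : u ∈ C
    · obtain ⟨w, hw1, hw2, hw3⟩ := h u hu
      exact ⟨w, fun _ => ⟨hw1, hw2, hw3⟩⟩
    · exact ⟨u, fun hu' => absurd hu' hu⟩
  choose f hf using h'
  set X : Finset V := insert v C with hX
  -- A : image of C, one outgoing edge per vertex of C
  set A : Finset (Sym2 V) := C.image (fun u => s(u, f u)) with hA
  have hAcard : A.card = C.card := by
    rw [hA]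
    apply Finset.card_image_of_injOn
    intro u hu u' hu' heq
    rcases Sym2.eq_iff.mp heq with ⟨h1, _⟩ | ⟨h1, h2⟩
    · exact h1
    · exact absurd (h1 ▸ hu) (hf u' hu').2.1
  have hAsub : A ⊆ cutSet G X := by
    intro e he
    rw [hA] at he
    obtain ⟨u, hu, rfl⟩ := Finset.mem_image.mp he
    obtain ⟨hadj, hnC, hnv⟩ := hf u hu
    refine Finset.mem_filter.mpr ⟨?_, u, mem_univ u, f u, mem_univ _, rfl, ?_, ?_⟩
    · exact SimpleGraph.mem_edgeFinset.mpr hadj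
    · exact Finset.mem_insert_of_mem hu
    · intro hmem
      rcases Finset.mem_insert.mp hmem with rfl | hc
      · exact hnv rfl
      · exact hnC hc
  -- B : edges from v straight to the outside
  set B : Finset (Sym2 V) :=
    ((G.neighborFinset v).filter (fun w => w ∉ C)).image (fun w => s(v, w)) with hB
  have hBcard : B.card = ((G.neighborFinset v).filter (fun w => w ∉ C)).card := by
    rw [hB]
    apply Finset.card_image_of_injOn
    intro w hw w' hw' heq
    rcases Sym2.eq_iff.mp heq with ⟨_, h2⟩ | ⟨h1, h2⟩
    · exact h2
    · have hadj : G.Adj v w := by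
        have := (Finset.mem_filter.mp hw).1
        rwa [SimpleGraph.mem_neighborFinset] at this
      exact absurd (h2 ▸ hadj) G.irrefl
  have hBsub : B ⊆ cutSet G X := by
    intro e he
    rw [hB] at he
    obtain ⟨w, hw, rfl⟩ := Finset.mem_image.mp he
    simp only [Finset.mem_filter, SimpleGraph.mem_neighborFinset] at hw
    refine Finset.mem_filter.mpr ⟨?_, v, mem_univ v, w, mem_univ _, rfl, ?_, ?_⟩
    · exact SimpleGraph.mem_edgeFinset.mpr hw.1
    · exact Finset.mem_insert_self v C
    · intro hmem
      rcases Finset.mem_insert.mp hmem with rfl | hc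
      · exact G.irrefl hw.1
      · exact hw.2 hc
  have hdisj : Disjoint A B := by
    rw [Finset.disjoint_left]
    intro e heA heB
    rw [hA] at heA; rw [hB] at heB
    obtain ⟨u, hu, rfl⟩ := Finset.mem_image.mp heA
    obtain ⟨w, hw, heq⟩ := Finset.mem_image.mp heB
    rcases Sym2.eq_iff.mp heq with ⟨h1, _⟩ | ⟨h1, _⟩
    · exact hv (by rw [h1]; exact hu)
    · exact (hf u hu).2.2 h1.symm
  have hlow : C.card + B.card ≤ cutCard G X := by
    have := Finset.card_le_card (Finset.union_subset hAsub hBsub)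
    rwa [Finset.card_union_of_disjoint hdisj, hAcard] at this
  -- cut of {v}
  have hvsub : cutSet G {v} ⊆ (G.neighborFinset v).image (fun w => s(v, w)) := by
    intro e he
    rw [cutSet, Finset.mem_filter] at he
    obtain ⟨hedge, a, _, b, _, rfl, ha, hb⟩ := he
    rw [Finset.mem_singleton] at ha
    subst ha
    have hadj : G.Adj a b := SimpleGraph.mem_edgeFinset.mp hedge
    exact Finset.mem_image.mpr ⟨b, by simpa using hadj, rfl⟩
  have hvcard : cutCard G {v} ≤ C.card + B.card := by
    calc cutCard G {v} ≤ ((G.neighborFinset v).image (fun w => s(v, w))).card :=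
          Finset.card_le_card hvsub
      _ ≤ (G.neighborFinset v).card := Finset.card_image_le
      _ = ((G.neighborFinset v).filter (fun w => w ∈ C)).card
          + ((G.neighborFinset v).filter (fun w => w ∉ C)).card :=
          (Finset.card_filter_add_card_filter_not (fun w => w ∈ C)).symm
      _ ≤ C.card + B.card := by
          rw [hBcard]
          gcongr
          exact fun w hw => (Finset.mem_filter.mp hw).2
  have hkey := hmin ∅ (Finset.empty_ssubset.mpr hne)
  have : insert v (∅ : Finset V) = {v} := rfl
  rw [this] at hkey
  omega
end

section
/- Let G be a finite simple graph, v a vertex, p an integer, and u a vertex with N[u] \ {v} of size at least 2p. Let S be the set of vertices in V(G) \ (N[u] ∪ {v}) with at most p non-neighbors in N[u] \ {v}. If |S| ≥ p + 3, then there is no v-minimal set C with |C| ≥ 3p, nondeg(C ∪ {v}) ≤ p, and N[u] \ {v} ⊆ C. -/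
open Finset

/-- `nondeg(X)`: the maximum, over vertices `w ∈ X`, of the number of vertices of
`X \ {w}` not adjacent to `w`. -/
def nondegF {V : Type*} [Fintype V] [DecidableEq V] (G : SimpleGraph V)
    [DecidableRel G.Adj] (X : Finset V) : ℕ :=
  X.sup (fun w => ((X.erase w).filter (fun u => ¬ G.Adj w u)).card)

/-- If `|N[u] \ {v}| ≥ 2p` and at least `p + 3` vertices outside `N[u] ∪ {v}` have at most
`p` non-neighbors in `N[u] \ {v}`, then there is no `v`-minimal set `C` with `|C| ≥ 3p`,
`nondeg(C ∪ {v}) ≤ p` and `N[u] \ {v} ⊆ C`. -/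
theorem no_large_vMinimal_with_nondeg {V : Type*} [Fintype V] [DecidableEq V]
    (G : SimpleGraph V) [DecidableRel G.Adj] (v u : V) (p : ℕ)
    (hNu : 2 * p ≤ ((insert u (G.neighborFinset u)).erase v).card)
    (S : Finset V)
    (hS : S = (univ \ insert v (insert u (G.neighborFinset u))).filter
        (fun w => (((insert u (G.neighborFinset u)).erase v).filter
            (fun x => ¬ G.Adj w x)).card ≤ p))
    (hScard : p + 3 ≤ S.card) :
    ¬ ∃ C : Finset V, VMinimal G v C ∧ 3 * p ≤ C.card ∧
        nondegF G (insert v C) ≤ p ∧ (insert u (G.neighborFinset u)).erase v ⊆ C := by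
  rintro ⟨C, ⟨hCne, hvC, hmin⟩, hC3p, hnd, hNC⟩
  classical
  set N : Finset V := (insert u (G.neighborFinset u)).erase v with hNdef
  set X : Finset V := insert v C with hXdef
  have hvN : v ∉ N := notMem_erase _ _
  have hCX : C ⊆ X := subset_insert _ _
  have hNX : N ⊆ X := hNC.trans hCX
  have huvC : u ∈ X := by
    by_cases huv : u = v
    · simp [hXdef, huv]
    · exact hCX (hNC (by simp [hNdef, huv]))
  -- S is disjoint from N and from {v}
  have hSN : ∀ w ∈ S, w ∉ N ∧ w ≠ v := by
    intro w hw
    rw [hS, mem_filter, mem_sdiff] at hw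
    obtain ⟨⟨-, hw1⟩, -⟩ := hw
    constructor
    · intro hwN
      exact hw1 (mem_insert_of_mem (mem_of_mem_erase hwN))
    · intro h; exact hw1 (by simp [h])
  -- degree of u is at most |N|
  have hdegu : G.degree u ≤ N.card := by
    have h1 : (insert u (G.neighborFinset u)).card = G.degree u + 1 := by
      rw [card_insert_of_notMem (by simp)]
      rfl
    have h2 : (insert u (G.neighborFinset u)).card - 1 ≤ N.card := by
      simpa [hNdef] using pred_card_le_card_erase (s := insert u (G.neighborFinset u)) (a := v)
    omega
  -- |C| ≤ p + degree u ≤ p + |N|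
  have hCcard : C.card ≤ N.card + p := by
    have hsup : ((X.erase u).filter (fun x => ¬ G.Adj u x)).card ≤ p :=
      le_trans (Finset.le_sup (f := fun w => ((X.erase w).filter (fun x => ¬ G.Adj w x)).card) huvC) hnd
    have hcover : X.erase u ⊆ ((X.erase u).filter (fun x => ¬ G.Adj u x)) ∪ G.neighborFinset u := by
      intro x hx
      by_cases hadj : G.Adj u x
      · exact mem_union_right _ (by simpa using hadj)
      · exact mem_union_left _ (mem_filter.mpr ⟨hx, hadj⟩)
    have h3 : (X.erase u).card ≤ p + G.degree u := by
      calc (X.erase u).card ≤ _ := card_le_card hcover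
        _ ≤ _ + _ := card_union_le _ _
        _ ≤ p + G.degree u := by
            exact Nat.add_le_add hsup (le_of_eq rfl)
    have h4 : C.card ≤ (X.erase u).card := by
      have hXc : X.card = C.card + 1 := card_insert_of_notMem hvC
      have := card_erase_of_mem huvC
      omega
    omega
  -- |S \ C| ≥ 3
  have hSC3 : 3 ≤ (S \ C).card := by
    have hsub : S ∩ C ⊆ C \ N := by
      intro x hx
      rw [mem_inter] at hx
      exact mem_sdiff.mpr ⟨hx.2, (hSN x hx.1).1⟩
    have h1 : (C \ N).card = C.card - N.card := card_sdiff_of_subset hNC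
    have h2 : (S ∩ C).card ≤ p := by
      have := card_le_card hsub
      omega
    have h3 := card_sdiff_add_card_inter S C
    omega
  -- each w ∈ S has many neighbors in N
  have hSadj : ∀ w ∈ S, N.card - p ≤ (N.filter (fun x => G.Adj w x)).card := by
    intro w hw
    rw [hS, mem_filter] at hw
    have := card_filter_add_card_filter_not (s := N) (p := fun x => G.Adj w x)
    have h2 : (N.filter (fun x => ¬ G.Adj w x)).card ≤ p := hw.2
    omega
  -- the three edge collections
  set A : Finset (Sym2 V) :=
    ((G.neighborFinset v).filter (fun x => x ∉ X)).image (fun x => s(v, x)) with hAdef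
  set A' : Finset (Sym2 V) := (C.filter (fun x => G.Adj v x)).image (fun x => s(v, x)) with hA'def
  set B : Finset (Sym2 V) :=
    (S \ C).biUnion (fun w => (N.filter (fun x => G.Adj w x)).image (fun x => s(w, x))) with hBdef
  have hinj : ∀ a : V, Function.Injective (fun x : V => s(a, x)) := by
    intro a x y hxy
    simpa using Sym2.congr_right.mp hxy
  have hAcut : A ⊆ cutSet G X := by
    intro e he
    rw [hAdef, mem_image] at he
    obtain ⟨x, hx, rfl⟩ := he
    rw [mem_filter, SimpleGraph.mem_neighborFinset] at hx
    refine mem_filter.mpr ⟨?_, v, mem_univ _, x, mem_univ _, rfl, mem_insert_self _ _, hx.2⟩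
    rw [SimpleGraph.mem_edgeFinset]
    exact hx.1
  have hBcut : B ⊆ cutSet G X := by
    intro e he
    rw [hBdef, mem_biUnion] at he
    obtain ⟨w, hw, he⟩ := he
    rw [mem_image] at he
    obtain ⟨x, hx, rfl⟩ := he
    rw [mem_filter] at hx
    have hwS := mem_sdiff.mp hw
    have hwX : w ∉ X := by
      rw [hXdef, mem_insert]
      push_neg
      exact ⟨(hSN w hwS.1).2, hwS.2⟩
    refine mem_filter.mpr ⟨?_, x, mem_univ _, w, mem_univ _, Sym2.eq_swap, hNX hx.1, hwX⟩
    rw [SimpleGraph.mem_edgeFinset]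
    exact hx.2
  have hABdisj : Disjoint A B := by
    rw [disjoint_left]
    intro e heA heB
    rw [hAdef, mem_image] at heA
    obtain ⟨x, -, rfl⟩ := heA
    rw [hBdef, mem_biUnion] at heB
    obtain ⟨w, hw, heB⟩ := heB
    rw [mem_image] at heB
    obtain ⟨y, hy, hey⟩ := heB
    have hv : v ∈ (s(w, y) : Sym2 V) := by rw [hey]; simp
    rw [Sym2.mem_iff] at hv
    rcases hv with hv | hv
    · exact (hSN w (mem_sdiff.mp hw).1).2 hv.symm
    · exact hvN (hv ▸ (mem_filter.mp hy).1)
  -- cardinality of B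
  have hBcard : 3 * (N.card - p) ≤ B.card := by
    have hdisj : ∀ w₁ ∈ S \ C, ∀ w₂ ∈ S \ C, w₁ ≠ w₂ →
        Disjoint ((N.filter (fun x => G.Adj w₁ x)).image (fun x => s(w₁, x)))
          ((N.filter (fun x => G.Adj w₂ x)).image (fun x => s(w₂, x))) := by
      intro w₁ hw₁ w₂ hw₂ hne
      rw [disjoint_left]
      intro e he1 he2
      rw [mem_image] at he1 he2
      obtain ⟨x, hx, rfl⟩ := he1
      obtain ⟨y, hy, hey⟩ := he2
      rw [Sym2.eq_iff] at hey
      rcases hey with ⟨h1, -⟩ | ⟨h1, h2⟩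
      · exact hne (h1.symm)
      · exact (hSN w₁ (mem_sdiff.mp hw₁).1).1 (h2 ▸ (mem_filter.mp hy).1)
    rw [hBdef, card_biUnion hdisj]
    calc 3 * (N.card - p) ≤ (S \ C).card * (N.card - p) := by
          exact Nat.mul_le_mul_right _ hSC3
      _ ≤ ∑ w ∈ S \ C, (N.card - p) := by rw [sum_const, smul_eq_mul]
      _ ≤ ∑ w ∈ S \ C, ((N.filter (fun x => G.Adj w x)).image (fun x => s(w, x))).card := by
          refine sum_le_sum ?_
          intro w hw
          rw [card_image_of_injective _ (hinj w)]
          exact hSadj w (mem_sdiff.mp hw).1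
  -- the cut of {v} is contained in A ∪ A'
  have hvcut : cutSet G {v} ⊆ A ∪ A' := by
    intro e he
    rw [cutSet, mem_filter] at he
    obtain ⟨heE, a, -, b, -, rfl, hav, hbv⟩ := he
    rw [mem_singleton] at hav hbv
    rw [hav] at heE ⊢
    have hadj : G.Adj v b := by
      rw [SimpleGraph.mem_edgeFinset, SimpleGraph.mem_edgeSet] at heE
      exact heE
    by_cases hbC : b ∈ C
    · exact mem_union_right _ (mem_image.mpr ⟨b, mem_filter.mpr ⟨hbC, hadj⟩, rfl⟩)
    · refine mem_union_left _ (mem_image.mpr ⟨b, mem_filter.mpr ⟨?_, ?_⟩, rfl⟩)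
      · rwa [SimpleGraph.mem_neighborFinset]
      · rw [hXdef, mem_insert]
        push_neg
        exact ⟨hbv, hbC⟩
  -- minimality applied to ∅
  have hmin0 : cutCard G X < cutCard G {v} := by
    have := hmin ∅ (empty_ssubset.mpr hCne)
    simpa [hXdef] using this
  -- put everything together
  have hlow : A.card + 3 * (N.card - p) ≤ cutCard G X := by
    calc A.card + 3 * (N.card - p) ≤ A.card + B.card := by omega
      _ = (A ∪ B).card := (card_union_of_disjoint hABdisj).symm
      _ ≤ (cutSet G X).card := card_le_card (union_subset hAcut hBcut)
  have hup : cutCard G {v} ≤ A.card + C.card := by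
    calc cutCard G {v} ≤ (A ∪ A').card := card_le_card hvcut
      _ ≤ A.card + A'.card := card_union_le _ _
      _ ≤ A.card + C.card := by
          refine Nat.add_le_add_left ?_ _
          exact le_trans (card_image_le) (card_le_card (filter_subset _ _))
  have h2p : 2 * p ≤ N.card := hNu
  omega
end

section
/- Let q ≥ 1 and let a₁, …, a_q be nonnegative integers with ∑_{i=1}^q a_i · i ≤ q. Then ∏_{i : a_i ≠ 0} (q / a_i)^{a_i} ≤ e^{2q}. -/
open Finset

lemma sum_i_exp_neg_le_one (s : Finset ℕ) : ∑ i ∈ s, (i : ℝ) * Real.exp (-(i:ℝ)) ≤ 1 := by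
  have hr : ‖Real.exp (-1 : ℝ)‖ < 1 := by
    rw [Real.norm_eq_abs, abs_of_pos (Real.exp_pos _)]
    exact Real.exp_lt_one_iff.mpr (by norm_num)
  have hsum : Summable (fun i : ℕ => (i : ℝ) * (Real.exp (-1)) ^ i) :=
    (hasSum_coe_mul_geometric_of_norm_lt_one hr).summable
  have key : ∑ i ∈ s, (i : ℝ) * (Real.exp (-1)) ^ i ≤ 1 := by
    calc ∑ i ∈ s, (i : ℝ) * (Real.exp (-1)) ^ i
        ≤ ∑' i : ℕ, (i : ℝ) * (Real.exp (-1)) ^ i :=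
          Summable.sum_le_tsum s (fun i _ => by positivity) hsum
      _ = Real.exp (-1) / (1 - Real.exp (-1)) ^ 2 :=
          tsum_coe_mul_geometric_of_norm_lt_one hr
      _ ≤ 1 := by
          have h2 : (2.7 : ℝ) < Real.exp 1 := by
            have := Real.exp_one_gt_d9; linarith
          have h3 : Real.exp (-1) * Real.exp 1 = 1 := by
            rw [← Real.exp_add]; norm_num
          have h4 : (0:ℝ) < Real.exp (-1) := Real.exp_pos _
          have h5 : Real.exp (-1) < 1 := by rw [← Real.exp_zero]; gcongr; norm_num
          rw [div_le_one (by nlinarith)]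
          nlinarith [sq_nonneg (Real.exp 1 - 2.7)]
  calc ∑ i ∈ s, (i : ℝ) * Real.exp (-(i:ℝ))
      = ∑ i ∈ s, (i : ℝ) * (Real.exp (-1)) ^ i := by
        refine Finset.sum_congr rfl fun i _ => ?_
        rw [← Real.exp_nat_mul]; ring_nf
    _ ≤ 1 := key

/-- If `∑ aᵢ · i ≤ q`, then `∏_{aᵢ ≠ 0} (q / aᵢ)^{aᵢ} ≤ e^{2q}`. -/
theorem prod_q_div_a_bound (q : ℕ) (hq : 1 ≤ q) (a : ℕ → ℕ)
    (ha : ∑ i ∈ Finset.Icc 1 q, a i * i ≤ q) :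
    ∏ i ∈ (Finset.Icc 1 q).filter (fun i => a i ≠ 0),
        ((q : ℝ) / (a i : ℝ)) ^ (a i) ≤ Real.exp (2 * q) := by
  set S := (Finset.Icc 1 q).filter (fun i => a i ≠ 0) with hS
  set p : ℕ → Prop := fun i => (q : ℝ) ≤ (a i : ℝ) * Real.exp i with hp
  have hdec : DecidablePred p := fun i => Real.decidableLE _ _
  -- facts about members of S
  have hmem : ∀ i ∈ S, 1 ≤ i ∧ i ≤ q ∧ 1 ≤ a i := by
    intro i hi
    simp only [hS, mem_filter, mem_Icc] at hi
    exact ⟨hi.1.1, hi.1.2, Nat.one_le_iff_ne_zero.mpr hi.2⟩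
  -- Part A : q ≤ aᵢ eⁱ
  have hA : ∏ i ∈ S.filter p, ((q : ℝ) / (a i : ℝ)) ^ (a i) ≤ Real.exp q := by
    calc ∏ i ∈ S.filter p, ((q : ℝ) / (a i : ℝ)) ^ (a i)
        ≤ ∏ i ∈ S.filter p, Real.exp ((a i : ℝ) * i) := by
          refine Finset.prod_le_prod (fun i _ => by positivity) fun i hi => ?_
          have hi' := hmem i (Finset.filter_subset _ _ hi)
          have hpi : (q : ℝ) ≤ (a i : ℝ) * Real.exp i := (Finset.mem_filter.mp hi).2
          have hai : (0:ℝ) < (a i : ℝ) := by exact_mod_cast hi'.2.2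
          have hdivle : (q : ℝ) / (a i : ℝ) ≤ Real.exp i := by
            rw [div_le_iff₀ hai]; linarith [hpi]
          calc ((q : ℝ) / (a i : ℝ)) ^ (a i) ≤ (Real.exp i) ^ (a i) := by
                exact pow_le_pow_left₀ (by positivity) hdivle _
            _ = Real.exp ((a i : ℝ) * i) := by rw [Real.exp_nat_mul]
      _ = Real.exp (∑ i ∈ S.filter p, (a i : ℝ) * i) := by
          rw [Real.exp_sum]
      _ ≤ Real.exp q := by
          apply Real.exp_le_exp.mpr
          have h1 : ∑ i ∈ S.filter p, (a i : ℝ) * i ≤ ∑ i ∈ Finset.Icc 1 q, (a i : ℝ) * i := by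
            refine Finset.sum_le_sum_of_subset_of_nonneg ?_ (fun i _ _ => by positivity)
            exact (Finset.filter_subset _ _).trans (Finset.filter_subset _ _)
          have h2 : ∑ i ∈ Finset.Icc 1 q, (a i : ℝ) * i ≤ q := by
            exact_mod_cast ha
          linarith
  -- Part B : aᵢ eⁱ < q
  have hB : ∏ i ∈ S.filter (fun i => ¬ p i), ((q : ℝ) / (a i : ℝ)) ^ (a i) ≤ Real.exp q := by
    calc ∏ i ∈ S.filter (fun i => ¬ p i), ((q : ℝ) / (a i : ℝ)) ^ (a i)
        ≤ ∏ i ∈ S.filter (fun i => ¬ p i), Real.exp ((q:ℝ) * ((i:ℝ) * Real.exp (-(i:ℝ)))) := by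
          refine Finset.prod_le_prod (fun i _ => by positivity) fun i hi => ?_
          have hi' := hmem i (Finset.filter_subset _ _ hi)
          have hpi : (a i : ℝ) * Real.exp i < q := by
            have := (Finset.mem_filter.mp hi).2
            simpa [hp] using lt_of_not_ge this
          have hai : (0:ℝ) < (a i : ℝ) := by exact_mod_cast hi'.2.2
          have hqpos : (0:ℝ) < (q:ℝ) := by exact_mod_cast hq
          have hEpos : (0:ℝ) < Real.exp i := Real.exp_pos _
          have hdivpos : (0:ℝ) < (q:ℝ) / (a i : ℝ) := by positivity
          -- rewrite as exp of log
          have hfac : ((q : ℝ) / (a i : ℝ)) ^ (a i)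
              = Real.exp ((a i : ℝ) * Real.log ((q:ℝ) / (a i : ℝ))) := by
            rw [Real.exp_nat_mul, Real.exp_log hdivpos]
          rw [hfac]
          apply Real.exp_le_exp.mpr
          -- log bound : log(q/a) ≤ q/(a eⁱ) - 1 + i
          have hlog1 : Real.log ((q:ℝ) / ((a i : ℝ) * Real.exp i))
              ≤ (q:ℝ) / ((a i : ℝ) * Real.exp i) - 1 :=
            Real.log_le_sub_one_of_pos (by positivity)
          have hlog2 : Real.log ((q:ℝ) / ((a i : ℝ) * Real.exp i))
              = Real.log ((q:ℝ) / (a i : ℝ)) - i := by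
            rw [div_mul_eq_div_div, Real.log_div (by positivity) (ne_of_gt hEpos),
              Real.log_exp]
          have hlog : Real.log ((q:ℝ) / (a i : ℝ))
              ≤ (q:ℝ) / ((a i : ℝ) * Real.exp i) - 1 + i := by linarith
          have step1 : (a i : ℝ) * Real.log ((q:ℝ) / (a i : ℝ))
              ≤ (a i : ℝ) * ((q:ℝ) / ((a i : ℝ) * Real.exp i) - 1 + i) :=
            mul_le_mul_of_nonneg_left hlog (le_of_lt hai)
          have step2 : (a i : ℝ) * ((q:ℝ) / ((a i : ℝ) * Real.exp i) - 1 + i)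
              = (q:ℝ) / Real.exp i - (a i : ℝ) + (a i : ℝ) * i := by
            field_simp
          have hi1 : (1:ℝ) ≤ (i:ℝ) := by exact_mod_cast hi'.1
          have haq : (a i : ℝ) ≤ (q:ℝ) / Real.exp i := by
            rw [le_div_iff₀ hEpos]; linarith
          have hexpneg : Real.exp (-(i:ℝ)) = (Real.exp i)⁻¹ := Real.exp_neg _
          have step3 : (q:ℝ) / Real.exp i - (a i : ℝ) + (a i : ℝ) * i
              ≤ (q:ℝ) * ((i:ℝ) * Real.exp (-(i:ℝ))) := by
            rw [hexpneg]
            have key : ((i:ℝ) - 1) * ((q:ℝ) / Real.exp i - (a i : ℝ)) ≥ 0 :=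
              mul_nonneg (by linarith) (by linarith)
            have : (q:ℝ) * ((i:ℝ) * (Real.exp i)⁻¹) = ((q:ℝ) / Real.exp i) * i := by
              field_simp
            rw [this]
            nlinarith [key]
          linarith
      _ = Real.exp (∑ i ∈ S.filter (fun i => ¬ p i), (q:ℝ) * ((i:ℝ) * Real.exp (-(i:ℝ)))) := by
          rw [Real.exp_sum]
      _ ≤ Real.exp q := by
          apply Real.exp_le_exp.mpr
          rw [← Finset.mul_sum]
          have hqpos : (0:ℝ) ≤ (q:ℝ) := by positivity
          calc (q:ℝ) * ∑ i ∈ S.filter (fun i => ¬ p i), (i:ℝ) * Real.exp (-(i:ℝ))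
              ≤ (q:ℝ) * 1 := by
                exact mul_le_mul_of_nonneg_left (sum_i_exp_neg_le_one _) hqpos
            _ = q := mul_one _
  calc ∏ i ∈ S, ((q : ℝ) / (a i : ℝ)) ^ (a i)
      = (∏ i ∈ S.filter p, ((q : ℝ) / (a i : ℝ)) ^ (a i))
        * ∏ i ∈ S.filter (fun i => ¬ p i), ((q : ℝ) / (a i : ℝ)) ^ (a i) :=
        (Finset.prod_filter_mul_prod_filter_not S p _).symm
    _ ≤ Real.exp q * Real.exp q := by
        refine mul_le_mul hA hB (Finset.prod_nonneg fun i _ => by positivity) (Real.exp_nonneg _)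
    _ = Real.exp (2 * q) := by rw [← Real.exp_add]; ring_nf
end
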